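/- arXiv:1101.2061 — 7 statements merged into one kernel-verified Lean document; each statement's English description precedes it below -/
import Mathlib

section
/- Let G' be a vertex-minor of G obtained by deleting a set D of vertices and contracting a set C of vertices. Then two vertices u, v of G' are adjacent in G' if and only if there is a path in G from u to v all of whose inner vertices lie in C. -/
/-
Iterating the definitions, after deleting `D` and contracting `C` two surviving vertices are
adjacent iff they are joined by a path of `G - D` whose inner vertices lie in `C`; since `C` and `D`
are disjoint, such paths are the same in `G - D` and in `G`. The induction step for contracting
one more vertex `c` splits a path whose inner vertices lie in `C ∪ {c}` at `c`: the two halves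
are paths through `C`, and conversely two such paths meeting at `c` shortcut to one.
-/

/-- Deletion of a vertex `v`: the deleted vertex is kept but made isolated. -/
def delV {V : Type*} (G : SimpleGraph V) (v : V) : SimpleGraph V where
  Adj a b := a ≠ v ∧ b ≠ v ∧ G.Adj a b
  symm := by constructor; rintro a b ⟨h1, h2, h3⟩; exact ⟨h2, h1, h3.symm⟩
  loopless := by constructor; rintro a ⟨-, -, h⟩; exact G.irrefl h

/-- Contraction of a vertex `v`: `v` is removed (kept isolated) and its neighborhood is
turned into a clique. -/
def conV {V : Type*} (G : SimpleGraph V) (v : V) : SimpleGraph V where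
  Adj a b := a ≠ v ∧ b ≠ v ∧ a ≠ b ∧ (G.Adj a b ∨ (G.Adj a v ∧ G.Adj v b))
  symm := by
    constructor
    rintro a b ⟨h1, h2, h3, h4 | ⟨h4, h5⟩⟩
    exacts [⟨h2, h1, h3.symm, Or.inl h4.symm⟩, ⟨h2, h1, h3.symm, Or.inr ⟨h5.symm, h4.symm⟩⟩]
  loopless := by constructor; rintro a ⟨-, -, h, -⟩; exact h rfl

@[simp]
lemma delV_adj {V : Type*} (G : SimpleGraph V) (v a b : V) :
    (delV G v).Adj a b ↔ a ≠ v ∧ b ≠ v ∧ G.Adj a b :=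
  Iff.rfl

@[simp]
lemma conV_adj {V : Type*} (G : SimpleGraph V) (v a b : V) :
    (conV G v).Adj a b ↔ a ≠ v ∧ b ≠ v ∧ a ≠ b ∧ (G.Adj a b ∨ (G.Adj a v ∧ G.Adj v b)) :=
  Iff.rfl

namespace SimpleGraph

variable {V : Type*} {G H : SimpleGraph V} {S : Set V} {u v w c : V}

namespace Walk

def InnerVerticesIn (p : G.Walk u v) (S : Set V) : Prop :=
  ∀ x ∈ p.support, x ≠ u → x ≠ v → x ∈ S

lemma InnerVerticesIn.mono {p : G.Walk u v} {T : Set V} (hp : p.InnerVerticesIn S)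
    (hST : S ⊆ T) : p.InnerVerticesIn T :=
  fun x hx hxu hxv => hST (hp x hx hxu hxv)

lemma InnerVerticesIn.reverse {p : G.Walk u v} (hp : p.InnerVerticesIn S) :
    p.reverse.InnerVerticesIn S := by
  intro x hx hxv hxu
  exact hp x (by simpa using hx) hxu hxv

lemma InnerVerticesIn.append {p : G.Walk u w} {q : G.Walk w v} (hp : p.InnerVerticesIn S)
    (hq : q.InnerVerticesIn S) : (p.append q).InnerVerticesIn (insert w S) := by
  intro x hx hxu hxv
  by_cases hxw : x = w
  · exact .inl hxw
  rcases mem_support_append_iff p q |>.mp hx with hx | hx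
  exacts [.inr (hp x hx hxu hxw), .inr (hq x hx hxw hxv)]

lemma InnerVerticesIn.bypass [DecidableEq V] {p : G.Walk u v} (hp : p.InnerVerticesIn S) :
    p.bypass.InnerVerticesIn S :=
  fun x hx => hp x (p.support_bypass_subset_support hx)

@[simp]
lemma innerVerticesIn_mapLe (hGH : G ≤ H) (p : G.Walk u v) :
    (p.mapLe hGH).InnerVerticesIn S ↔ p.InnerVerticesIn S := by
  simp only [InnerVerticesIn, support_mapLe_eq_support]

@[simp]
lemma innerVerticesIn_transfer (p : G.Walk u v) (hp : ∀ e ∈ p.edges, e ∈ H.edgeSet) :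
    (p.transfer H hp).InnerVerticesIn S ↔ p.InnerVerticesIn S := by
  simp only [InnerVerticesIn, support_transfer]

lemma InnerVerticesIn.of_insert {p : G.Walk u v} (hp : p.InnerVerticesIn (insert c S))
    (hc : c ∈ p.support → c ≠ u → c ≠ v → c ∈ S) : p.InnerVerticesIn S := by
  intro x hx hxu hxv
  rcases hp x hx hxu hxv with rfl | hxS
  exacts [hc hx hxu hxv, hxS]

/-- On a path, `v` does not occur before `c`, so the inner vertices of the initial segment
up to `c` are inner vertices of the whole path. -/
lemma InnerVerticesIn.takeUntil [DecidableEq V] {p : G.Walk u v} (hpath : p.IsPath)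
    (hp : p.InnerVerticesIn (insert c S)) (hc : c ∈ p.support) (hcv : c ≠ v) :
    (p.takeUntil c hc).InnerVerticesIn S := by
  intro x hx hxu hxc
  have hxv : x ≠ v := by
    rintro rfl
    exact endpoint_notMem_support_takeUntil hpath hc hcv.symm hx
  exact (hp x (p.support_takeUntil_subset_support hc hx) hxu hxv).resolve_left hxc

end Walk

def JoinedThrough (G : SimpleGraph V) (S : Set V) (u v : V) : Prop :=
  ∃ p : G.Walk u v, p.IsPath ∧ p.InnerVerticesIn S

lemma adj_iff_ne_and_joinedThrough_empty : G.Adj u v ↔ u ≠ v ∧ G.JoinedThrough ∅ u v := by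
  constructor
  · intro h
    refine ⟨h.ne, h.toWalk, .of_adj h, ?_⟩
    intro x hx hxu hxv
    simp_all
  · rintro ⟨huv, p, -, hp⟩
    cases p with
    | nil => exact absurd rfl huv
    | @cons _ x _ h _ =>
      obtain rfl : x = v := by
        by_contra hxv
        exact hp x (by simp) h.ne.symm hxv
      exact h

lemma joinedThrough_insert_iff :
    G.JoinedThrough (insert c S) u v ↔
      G.JoinedThrough S u v ∨ (c ∉ S ∧ G.JoinedThrough S u c ∧ G.JoinedThrough S c v) := by
  classical
  constructor
  · rintro ⟨p, hpath, hp⟩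
    by_cases hc : c ∈ p.support ∧ c ≠ u ∧ c ≠ v ∧ c ∉ S
    · obtain ⟨hcp, hcu, hcv, hcS⟩ := hc
      have hcp' : c ∈ p.reverse.support := by simpa using hcp
      refine .inr ⟨hcS, ⟨_, hpath.takeUntil hcp, hp.takeUntil hpath hcp hcv⟩,
        ⟨_, (hpath.reverse.takeUntil hcp').reverse,
          (hp.reverse.takeUntil hpath.reverse hcp' hcu).reverse⟩⟩
    · refine .inl ⟨p, hpath, hp.of_insert fun hcp hcu hcv => ?_⟩
      by_contra hcS
      exact hc ⟨hcp, hcu, hcv, hcS⟩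
  · rintro (⟨p, hpath, hp⟩ | ⟨-, ⟨p, -, hp⟩, ⟨q, -, hq⟩⟩)
    · exact ⟨p, hpath, hp.mono (Set.subset_insert c S)⟩
    · exact ⟨_, (p.append q).bypass_isPath, (hp.append hq).bypass⟩

end SimpleGraph

open SimpleGraph

lemma foldr_delV_adj {V : Type*} (G : SimpleGraph V) (D : List V) (a b : V) :
    (D.foldr (fun d H => delV H d) G).Adj a b ↔ a ∉ D ∧ b ∉ D ∧ G.Adj a b := by
  induction D with
  | nil => simp
  | cons d D ih =>
    simp only [List.foldr_cons, delV_adj, ih, List.mem_cons, not_or]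
    tauto

lemma foldr_conV_adj {V : Type*} (H : SimpleGraph V) (C : List V) (a b : V) :
    (C.foldr (fun c K => conV K c) H).Adj a b ↔
      a ∉ C ∧ b ∉ C ∧ a ≠ b ∧ H.JoinedThrough {x | x ∈ C} a b := by
  induction C generalizing a b with
  | nil => simpa using adj_iff_ne_and_joinedThrough_empty
  | cons c C ih =>
    have hset : {x | x ∈ c :: C} = insert c {x | x ∈ C} := by ext; simp
    rw [hset, joinedThrough_insert_iff]
    simp only [List.foldr_cons, conV_adj, ih, List.mem_cons, not_or]
    tauto

lemma foldr_delV_le {V : Type*} (G : SimpleGraph V) (D : List V) :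
    D.foldr (fun d H => delV H d) G ≤ G :=
  fun a b hab => ((foldr_delV_adj G D a b).mp hab).2.2

lemma joinedThrough_foldr_delV_iff {V : Type*} {S : Set V} {u v : V} (G : SimpleGraph V)
    (D : List V) (hDS : ∀ x ∈ D, x ∉ S) (hu : u ∉ D) (hv : v ∉ D) :
    (D.foldr (fun d H => delV H d) G).JoinedThrough S u v ↔ G.JoinedThrough S u v := by
  constructor
  · rintro ⟨p, hpath, hp⟩
    exact ⟨p.mapLe (foldr_delV_le G D), hpath.mapLe _, by simpa using hp⟩
  · rintro ⟨p, hpath, hp⟩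
    have hsupp : ∀ x ∈ p.support, x ∉ D := by
      intro x hx hxD
      by_cases hxu : x = u
      · exact hu (hxu ▸ hxD)
      by_cases hxv : x = v
      · exact hv (hxv ▸ hxD)
      exact hDS x hxD (hp x hx hxu hxv)
    have hedges : ∀ e ∈ p.edges, e ∈ (D.foldr (fun d H => delV H d) G).edgeSet := by
      intro e he
      induction e using Sym2.ind with
      | _ x y =>
        exact (foldr_delV_adj G D x y).mpr ⟨hsupp x (p.fst_mem_support_of_mem_edges he),
          hsupp y (p.snd_mem_support_of_mem_edges he), p.adj_of_mem_edges he⟩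
    exact ⟨p.transfer _ hedges, hpath.transfer _, by simpa using hp⟩

/-- In the vertex-minor of `G` obtained by deleting the vertices of `D` and contracting the
vertices of `C`, two (remaining) vertices `u` and `v` are adjacent if and only if there is a
path in `G` from `u` to `v` all of whose inner vertices lie in `C`. -/
theorem stmt2 {V : Type*} (G : SimpleGraph V) (D C : List V)
    (hDC : ∀ x ∈ D, x ∉ C)
    (G' : SimpleGraph V)
    (hG' : G' = C.foldr (fun c H => conV H c) (D.foldr (fun d H => delV H d) G))
    (u v : V) (huD : u ∉ D) (huC : u ∉ C) (hvD : v ∉ D) (hvC : v ∉ C) :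
    G'.Adj u v ↔ u ≠ v ∧ ∃ p : G.Walk u v, p.IsPath ∧
      ∀ w ∈ p.support, w ≠ u → w ≠ v → w ∈ C := by
  rw [hG', foldr_conV_adj, joinedThrough_foldr_delV_iff (S := {x | x ∈ C}) G D hDC huD hvD]
  simp only [huC, hvC, not_false_eq_true, true_and]
  rfl
end

section
/- The class of chordal graphs is closed under vertex contraction: if G is chordal and v ∈ V(G), then G/v is chordal. -/
/-!
Let `C` be a chordless cycle of length at least 4 in `G/v`; we find one in `G`. The edges of `C`
that are not edges of `G` join neighbours of `v`, and three distinct neighbours of `v` on `C` would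
span a triangle of `G/v`, which a chordless cycle of length at least 4 cannot contain. Hence `C`
uses at most one such edge `xy`. If it uses none, `C` itself is a chordless cycle of `G`;
otherwise replacing `xy` by the path `x v y` gives one.
-/

/-- A graph is chordal if every cycle of length at least 4 has a chord, i.e. an edge of the
graph joining two vertices of the cycle which is not an edge of the cycle. -/
def Chordal {V : Type*} (G : SimpleGraph V) : Prop :=
  ∀ (v : V) (p : G.Walk v v), p.IsCycle → 4 ≤ p.length →
    ∃ a b, a ∈ p.support ∧ b ∈ p.support ∧ G.Adj a b ∧ s(a, b) ∉ p.edges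

/-- Contraction of a vertex `v`: remove `v` and make its neighborhood a clique. -/
def contractVert {V : Type*} (G : SimpleGraph V) (v : V) : SimpleGraph {u : V // u ≠ v} where
  Adj a b := (a : V) ≠ (b : V) ∧ (G.Adj a b ∨ (G.Adj a v ∧ G.Adj v b))
  symm := by
    constructor
    rintro a b ⟨h1, h2 | ⟨h2, h3⟩⟩
    exacts [⟨h1.symm, Or.inl h2.symm⟩, ⟨h1.symm, Or.inr ⟨h3.symm, h2.symm⟩⟩]
  loopless := by constructor; rintro a ⟨h, -⟩; exact h rfl

namespace SimpleGraph.Walk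

variable {V : Type*} {G : SimpleGraph V} {u v w x y z : V}

lemma IsCycle.eq_or_eq_or_eq_of_mem_edges {c : G.Walk u u} (hc : c.IsCycle)
    (hx : s(w, x) ∈ c.edges) (hy : s(w, y) ∈ c.edges) (hz : s(w, z) ∈ c.edges) :
    x = y ∨ x = z ∨ y = z := by
  by_contra! hne
  have htwo := hc.ncard_neighborSet_toSubgraph_eq_two (c.fst_mem_support_of_mem_edges hx)
  have hsub : {x, y, z} ⊆ c.toSubgraph.neighborSet w := by
    simp [Set.insert_subset_iff, adj_toSubgraph_iff_mem_edges, hx, hy, hz]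
  have := Set.ncard_le_ncard hsub (Set.finite_of_ncard_ne_zero (by omega))
  rw [Set.ncard_eq_three.mpr ⟨x, y, z, hne.1, hne.2.1, hne.2.2, rfl⟩] at this
  omega

lemma IsCycle.length_eq_three_of_mem_edges {c : G.Walk u u} (hc : c.IsCycle)
    (hxy : s(x, y) ∈ c.edges) (hyz : s(y, z) ∈ c.edges) (hzx : s(z, x) ∈ c.edges) :
    c.length = 3 := by
  classical
  by_contra hlen
  set S : Set V := {x, y, z}
  obtain ⟨d, hd, hdS⟩ : ∃ d ∈ c.support, d ∉ S := by
    by_contra! hS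
    have hsub : c.support.tail.toFinset ⊆ {x, y, z} := fun d hd ↦ by
      simpa [S] using hS d (List.mem_of_mem_tail (List.mem_toFinset.mp hd))
    have := (Finset.card_le_card hsub).trans Finset.card_le_three
    rw [List.toFinset_card_of_nodup hc.support_nodup, List.length_tail, length_support] at this
    have := hc.three_le_length
    omega
  have hx : x ∈ c.support := c.fst_mem_support_of_mem_edges hxy
  -- where a walk from `x` to `d` along `c` leaves the triangle, a vertex of the triangle has a
  -- third neighbour on `c`
  obtain ⟨e, he, heS, hnS⟩ :=
    ((c.dropUntil x hx).append (c.takeUntil d hd)).exists_boundary_dart S (by simp [S]) hdS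
  have hec : s(e.fst, e.snd) ∈ c.edges := by
    rw [darts_append, List.mem_append] at he
    refine List.mem_map_of_mem (f := Dart.edge) ?_
    rcases he with he | he
    exacts [c.darts_dropUntil_subset_darts hx he, c.darts_takeUntil_subset_darts hd he]
  have hxy' := (c.adj_of_mem_edges hxy).ne
  have hyz' := (c.adj_of_mem_edges hyz).ne
  have hzx' := (c.adj_of_mem_edges hzx).ne
  simp only [S, Set.mem_insert_iff, Set.mem_singleton_iff, not_or] at heS hnS
  rcases heS with h | h | h <;> rw [h] at hec
  · have := hc.eq_or_eq_or_eq_of_mem_edges hxy (Sym2.eq_swap ▸ hzx) hec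
    grind
  · have := hc.eq_or_eq_or_eq_of_mem_edges hyz (Sym2.eq_swap ▸ hxy) hec
    grind
  · have := hc.eq_or_eq_or_eq_of_mem_edges hzx (Sym2.eq_swap ▸ hyz) hec
    grind

lemma isChordless_reverse {p : G.Walk u v} : p.reverse.IsChordless ↔ p.IsChordless := by
  simp [isChordless_iff_forall_mem_edges]

lemma isChordless_rotate [DecidableEq V] {c : G.Walk v v} (h : u ∈ c.support) :
    (c.rotate u h).IsChordless ↔ c.IsChordless := by
  simp [isChordless_iff_forall_mem_edges, (c.rotate_edges u h).mem_iff]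

lemma IsCycle.length_eq_three_of_isChordless {c : G.Walk u u} (hc : c.IsCycle)
    (hch : c.IsChordless) (hx : x ∈ c.support) (hy : y ∈ c.support) (hz : z ∈ c.support)
    (hxy : G.Adj x y) (hyz : G.Adj y z) (hzx : G.Adj z x) : c.length = 3 :=
  hc.length_eq_three_of_mem_edges (hch.mem_edges hx hy hxy) (hch.mem_edges hy hz hyz)
    (hch.mem_edges hz hx hzx)

lemma IsCycle.exists_cons_of_isChordless {c : G.Walk u u} (hc : c.IsCycle)
    (hch : c.IsChordless) (he : s(x, y) ∈ c.edges) :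
    ∃ (h : G.Adj x y) (p : G.Walk y x),
      (cons h p).IsCycle ∧ (cons h p).IsChordless ∧ (cons h p).length = c.length := by
  classical
  have hx : x ∈ c.support := c.fst_mem_support_of_mem_edges he
  have hrot : (c.rotate x hx).IsCycle := hc.rotate hx
  have hy : y ∈ (c.rotate x hx).toSubgraph.neighborSet x := by
    simpa [adj_toSubgraph_iff_mem_edges, (c.rotate_edges x hx).mem_iff] using he
  rw [hrot.neighborSet_toSubgraph_endpoint] at hy
  obtain ⟨c', hc', hch', hlen', hsnd⟩ : ∃ c' : G.Walk x x,
      c'.IsCycle ∧ c'.IsChordless ∧ c'.length = c.length ∧ c'.snd = y := by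
    rcases hy with rfl | rfl
    · exact ⟨_, hrot, (isChordless_rotate hx).mpr hch, length_rotate .., rfl⟩
    · exact ⟨_, hrot.reverse, isChordless_reverse.mpr ((isChordless_rotate hx).mpr hch),
        by simp, snd_reverse _⟩
  cases c' with
  | nil => exact absurd hc' not_isCycle_nil
  | cons h p =>
    rw [snd_cons] at hsnd
    subst hsnd
    exact ⟨h, p, hc', hch', hlen'⟩

end SimpleGraph.Walk

namespace contractVert

open SimpleGraph Walk

variable {V : Type*} {G : SimpleGraph V} {v : V}

lemma adj_of_adj_of_adj {a b : {u : V // u ≠ v}} (hab : a ≠ b) (ha : G.Adj a v)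
    (hb : G.Adj v b) : (contractVert G v).Adj a b :=
  ⟨fun h ↦ hab (Subtype.ext h), Or.inr ⟨ha, hb⟩⟩

lemma comap_val_le : G.comap (Subtype.val : {u : V // u ≠ v} → V) ≤ contractVert G v :=
  fun _ _ h ↦ ⟨G.ne_of_adj h, Or.inl h⟩

lemma adj_of_adj_of_not_adj {a b : {u : V // u ≠ v}} (hab : (contractVert G v).Adj a b)
    (hn : ¬G.Adj a b) : G.Adj a v ∧ G.Adj v b :=
  hab.2.resolve_left hn

def liftWalk {a b : {u : V // u ≠ v}} (p : (contractVert G v).Walk a b)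
    (hp : ∀ e ∈ p.edges, e ∈ (G.comap Subtype.val).edgeSet) : G.Walk a b :=
  (p.transfer _ hp).map (Hom.comap Subtype.val G)

section liftWalk

variable {a b : {u : V // u ≠ v}} {p : (contractVert G v).Walk a b}
  {hp : ∀ e ∈ p.edges, e ∈ (G.comap Subtype.val).edgeSet}

@[simp]
lemma support_liftWalk : (liftWalk p hp).support = p.support.map Subtype.val :=
  (Walk.support_map _ _).trans (by rw [support_transfer]; rfl)

@[simp]
lemma edges_liftWalk : (liftWalk p hp).edges = p.edges.map (Sym2.map Subtype.val) :=
  (Walk.edges_map _ _).trans (by rw [edges_transfer]; rfl)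

@[simp]
lemma length_liftWalk : (liftWalk p hp).length = p.length :=
  (Walk.length_map _ _).trans (length_transfer _ _)

lemma isPath_liftWalk (h : p.IsPath) : (liftWalk p hp).IsPath :=
  (h.transfer hp).map Subtype.val_injective

end liftWalk

lemma isCycle_liftWalk {a : {u : V // u ≠ v}} {p : (contractVert G v).Walk a a}
    {hp : ∀ e ∈ p.edges, e ∈ (G.comap Subtype.val).edgeSet} (h : p.IsCycle) :
    (liftWalk p hp).IsCycle :=
  (h.transfer hp).map Subtype.val_injective

section cycle

variable {u : {u : V // u ≠ v}} {C : (contractVert G v).Walk u u}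

lemma length_eq_three_of_adj {a b c : {u : V // u ≠ v}} (hC : C.IsCycle) (hch : C.IsChordless)
    (ha : a ∈ C.support) (hb : b ∈ C.support) (hc : c ∈ C.support)
    (hab : a ≠ b) (hbc : b ≠ c) (hca : c ≠ a) (hav : G.Adj a v) (hbv : G.Adj b v)
    (hcv : G.Adj c v) : C.length = 3 :=
  hC.length_eq_three_of_isChordless hch ha hb hc (adj_of_adj_of_adj hab hav hbv.symm)
    (adj_of_adj_of_adj hbc hbv hcv.symm) (adj_of_adj_of_adj hca hcv hav.symm)

lemma length_eq_three_of_not_adj {a b c d : {u : V // u ≠ v}} (hC : C.IsCycle)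
    (hch : C.IsChordless) (hab : s(a, b) ∈ C.edges) (hcd : s(c, d) ∈ C.edges)
    (hne : s(a, b) ≠ s(c, d)) (hnab : ¬G.Adj a b) (hncd : ¬G.Adj c d) : C.length = 3 := by
  obtain ⟨hav, hbv⟩ := adj_of_adj_of_not_adj (C.adj_of_mem_edges hab) hnab
  obtain ⟨hcv, hdv⟩ := adj_of_adj_of_not_adj (C.adj_of_mem_edges hcd) hncd
  have ha := C.fst_mem_support_of_mem_edges hab
  have hb := C.snd_mem_support_of_mem_edges hab
  have hab' : a ≠ b := (C.adj_of_mem_edges hab).ne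
  have hcd' : c ≠ d := (C.adj_of_mem_edges hcd).ne
  by_cases! hc : c = a ∨ c = b
  · by_cases! hd : d = a ∨ d = b
    · exfalso; grind -- `{c, d} = {a, b}`
    exact length_eq_three_of_adj hC hch ha hb (C.snd_mem_support_of_mem_edges hcd) hab'
      hd.2.symm hd.1 hav hbv.symm hdv.symm
  exact length_eq_three_of_adj hC hch ha hb (C.fst_mem_support_of_mem_edges hcd) hab'
    hc.2.symm hc.1 hav hbv.symm hcv

lemma isChordless_liftWalk (hch : C.IsChordless)
    (hC : ∀ e ∈ C.edges, e ∈ (G.comap Subtype.val).edgeSet) : (liftWalk C hC).IsChordless := by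
  rw [isChordless_iff_forall_mem_edges]
  intro A B hA hB hAB
  rw [support_liftWalk, List.mem_map] at hA hB
  obtain ⟨a, ha, rfl⟩ := hA
  obtain ⟨b, hb, rfl⟩ := hB
  rw [edges_liftWalk]
  exact List.mem_map_of_mem (f := Sym2.map Subtype.val) (hch.mem_edges ha hb (comap_val_le hAB))

end cycle

lemma exists_isChordless_of_cons {x y : {u : V // u ≠ v}} {hxy : (contractVert G v).Adj x y}
    {P : (contractVert G v).Walk y x} (hC : (cons hxy P).IsCycle)
    (hch : (cons hxy P).IsChordless) (hlen : 4 ≤ (cons hxy P).length) (hn : ¬G.Adj x y)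
    (hP : ∀ e ∈ P.edges, e ∈ (G.comap Subtype.val).edgeSet) :
    ∃ (w : V) (D : G.Walk w w), D.IsCycle ∧ 4 ≤ D.length ∧ D.IsChordless := by
  obtain ⟨hxv, hvy⟩ := adj_of_adj_of_not_adj hxy hn
  set P' := liftWalk P hP
  set D := cons hxv (cons hvy P')
  have hvP' : v ∉ P'.support := by simp [P']
  have hPpath := ((cons_isCycle_iff _ _).mp hC).1
  have hvD {b} (hb : b ∈ (cons hxy P).support) (hvb : G.Adj v b) : s(v, b.val) ∈ D.edges := by
    by_cases hbx : b = x
    · simp [D, hbx, Sym2.eq_swap]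
    by_cases hby : b = y
    · simp [D, hby]
    -- otherwise `x`, `y`, `b` would form a triangle in the chordless cycle `cons hxy P`
    have := length_eq_three_of_adj hC hch (start_mem_support ..) (by simp) hb hxy.ne
      (Ne.symm hby) hbx hxv hvy.symm hvb.symm
    omega
  have hGD {a b} (ha : a ∈ (cons hxy P).support) (hb : b ∈ (cons hxy P).support)
      (hab : G.Adj a b) : s(a.val, b.val) ∈ D.edges := by
    have hab' := hch.mem_edges ha hb (comap_val_le hab)
    rw [edges_cons, List.mem_cons] at hab'
    rcases hab' with hxy' | hP
    · rcases Sym2.eq_iff.mp hxy' with ⟨rfl, rfl⟩ | ⟨rfl, rfl⟩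
      exacts [absurd hab hn, absurd hab.symm hn]
    · simp only [D, P', edges_cons, edges_liftWalk, List.mem_cons, List.mem_map]
      exact Or.inr (Or.inr ⟨_, hP, rfl⟩)
  have hsupp {A} (hA : A ∈ D.support) : A = v ∨ ∃ a ∈ (cons hxy P).support, A = a.val := by
    simp only [D, P', support_cons, support_liftWalk, List.mem_cons, List.mem_map] at hA
    grind [support_cons]
  refine ⟨x, D, ?_, by simp only [length_cons, D, P', length_liftWalk] at hlen ⊢; omega, ?_⟩
  · rw [cons_isCycle_iff, cons_isPath_iff, edges_cons, List.mem_cons, not_or]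
    refine ⟨⟨isPath_liftWalk hPpath, hvP'⟩, ?_, fun h ↦ hvP' (P'.snd_mem_support_of_mem_edges h)⟩
    grind [Sym2.eq_iff, hxy.1]
  · rw [isChordless_iff_forall_mem_edges]
    intro A B hA hB hAB
    rcases hsupp hA with rfl | ⟨a, ha, rfl⟩ <;> rcases hsupp hB with rfl | ⟨b, hb, rfl⟩
    · exact absurd hAB (G.irrefl)
    · exact hvD hb hAB
    · exact Sym2.eq_swap ▸ hvD ha hAB.symm
    · exact hGD ha hb hAB

lemma exists_isChordless_of_isChordless {u : {u : V // u ≠ v}} {C : (contractVert G v).Walk u u}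
    (hC : C.IsCycle) (hlen : 4 ≤ C.length) (hch : C.IsChordless) :
    ∃ (w : V) (D : G.Walk w w), D.IsCycle ∧ 4 ≤ D.length ∧ D.IsChordless := by
  by_cases! hall : ∀ e ∈ C.edges, e ∈ (G.comap Subtype.val).edgeSet
  · exact ⟨_, liftWalk C hall, isCycle_liftWalk hC, by simpa using hlen,
      isChordless_liftWalk hch hall⟩
  obtain ⟨⟨x, y⟩, he, hxy⟩ := hall
  obtain ⟨_, P, hC', hch', hlen'⟩ := hC.exists_cons_of_isChordless hch he
  by_cases! hP : ∀ e ∈ P.edges, e ∈ (G.comap Subtype.val).edgeSet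
  · exact exists_isChordless_of_cons hC' hch' (hlen' ▸ hlen) hxy hP
  obtain ⟨⟨a, b⟩, hab, hab'⟩ := hP
  have hne : s(x, y) ≠ s(a, b) := fun h ↦ ((cons_isCycle_iff _ _).mp hC').2 (h ▸ hab)
  have := length_eq_three_of_not_adj hC' hch' (by simp) (by simp [hab]) hne hxy hab'
  omega

end contractVert

lemma chordal_iff_not_isChordless {V : Type*} {G : SimpleGraph V} :
    Chordal G ↔ ∀ (u : V) (p : G.Walk u u), p.IsCycle → 4 ≤ p.length → ¬p.IsChordless := by
  simp [Chordal, SimpleGraph.Walk.isChordless_iff_forall_mem_edges]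

/-- Chordal graphs are closed under vertex contraction. -/
theorem stmt3 {V : Type*} (G : SimpleGraph V) (v : V) (h : Chordal G) :
    Chordal (contractVert G v) := by
  rw [chordal_iff_not_isChordless] at h ⊢
  intro u C hC hlen hch
  obtain ⟨w, D, hD, hDlen, hDch⟩ := contractVert.exists_isChordless_of_isChordless hC hlen hch
  exact h w D hD hDlen hDch
end

section
/- The class of P_k-free graphs is closed under vertex contraction: if G has no induced path on k vertices and v ∈ V(G), then G/v has no induced path on k vertices. -/
/-!
Induced paths on `n` vertices are induced copies of `pathGraph n`. Let `f` be one in `G / v`.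
If every edge of the path is an edge of `G`, then `f` is also an induced copy in `G`. Otherwise
some path edge `f i — f (i + 1)` exists only through `v`. Then `v` is adjacent to `f i` and
`f (i + 1)` and, the path being induced in `G / v`, to no other path vertex; so this is the only
path edge missing in `G`. Inserting `v` between `f i` and `f (i + 1)` yields an induced path on
`n + 1` vertices in `G`, which contains one on `n` vertices.
-/

/-- A graph is `P_k`-free if it has no induced path on `k` vertices. -/
def PkFree {V : Type*} (k : ℕ) (G : SimpleGraph V) : Prop :=
  ¬ ∃ (s t : V) (p : G.Walk s t), p.IsPath ∧
      (∀ a ∈ p.support, ∀ b ∈ p.support, G.Adj a b → s(a, b) ∈ p.edges) ∧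
      p.support.length = k

theorem Fin.val_succ_succAbove {n : ℕ} (i j : Fin n) :
    (i.succ.succAbove j : ℕ) = if j ≤ i then (j : ℕ) else j + 1 := by
  split_ifs with h
  · rw [Fin.succAbove_succ_of_le _ _ h, Fin.val_castSucc]
  · rw [Fin.succAbove_succ_of_lt _ _ (not_le.mp h), Fin.val_succ]

namespace SimpleGraph

variable {V : Type*} {G : SimpleGraph V}

theorem pathGraph_isIndContained_of_le {m n : ℕ} (h : m ≤ n) : pathGraph m ⊴ pathGraph n :=
  ⟨⟨Fin.castLEEmb h, by simp [pathGraph_adj]⟩⟩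

theorem Walk.IsPath.pathGraph_isIndContained {u w : V} {p : G.Walk u w} (hp : p.IsPath)
    (hc : p.IsChordless) : pathGraph (p.length + 1) ⊴ G := by
  classical
  exact hp.pathGraphIsoToSubgraph.isIndContained.trans (isInduced_toSubgraph.mpr hc).isIndContained

theorem Embedding.exists_isPath_isChordless {n : ℕ} (f : pathGraph (n + 1) ↪g G) :
    ∃ (u w : V) (p : G.Walk u w), p.IsPath ∧ p.IsChordless ∧ p.length = n := by
  have hchain : (List.ofFn f).IsChain G.Adj :=
    List.isChain_ofFn.mpr fun _ _ => f.map_adj_iff.mpr (pathGraph_adj.mpr (Or.inl rfl))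
  set p := Walk.ofSupport _ (by simp) hchain
  have hsupp : p.support = List.ofFn f := Walk.support_ofSupport _ _
  have hlen : p.length = n := by simp [p]
  have hvert : ∀ a : Fin (n + 1), p.getVert a = f a := fun a => by
    rw [Walk.getVert_eq_support_getElem p (by omega)]
    simp only [hsupp, List.getElem_ofFn]
  refine ⟨_, _, p, Walk.IsPath.mk' (by rw [hsupp]; exact List.nodup_ofFn.mpr f.injective), ?_, hlen⟩
  rw [Walk.isChordless_iff_forall_mem_edges, hsupp]
  simp only [List.mem_ofFn]
  rintro _ _ ⟨a, rfl⟩ ⟨b, rfl⟩ hab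
  rw [Walk.mk_mem_edges_iff_exists]
  rcases pathGraph_adj.mp (f.map_adj_iff.mp hab) with h | h
  · refine ⟨a, by omega, ?_⟩
    rw [hvert a, show (a : ℕ) + 1 = (b : ℕ) from h, hvert b]
  · refine ⟨b, by omega, ?_⟩
    rw [hvert b, show (b : ℕ) + 1 = (a : ℕ) from h, hvert a, Sym2.eq_swap]

theorem isIndContained_pathGraph_succ_of_subdivide {n : ℕ} {g : Fin n → V}
    (hg : Function.Injective g) {v : V} (hv : ∀ x, g x ≠ v) {i j : Fin n} (hij : (i : ℕ) + 1 = j)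
    (hadj : ∀ x y,
      G.Adj (g x) (g y) ↔ (pathGraph n).Adj x y ∧ ¬ (x = i ∧ y = j) ∧ ¬ (x = j ∧ y = i))
    (hvadj : ∀ x, G.Adj v (g x) ↔ x = i ∨ x = j) :
    pathGraph (n + 1) ⊴ G := by
  -- `v` sits at position `i + 1`, between `g i` and `g j`; later vertices of `g` move up by one.
  let g' : Fin (n + 1) → V := Fin.insertNth i.succ v g
  refine ⟨⟨⟨g', ?_⟩, ?_⟩⟩
  · intro a b hab
    rcases Fin.eq_self_or_eq_succAbove i.succ a with rfl | ⟨x, rfl⟩ <;>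
      rcases Fin.eq_self_or_eq_succAbove i.succ b with rfl | ⟨y, rfl⟩ <;>
      simp_all [g', Fin.insertNth_apply_same, Fin.insertNth_apply_succAbove, hg.eq_iff]
  · intro a b
    change G.Adj (g' a) (g' b) ↔ _
    rcases Fin.eq_self_or_eq_succAbove i.succ a with rfl | ⟨x, rfl⟩ <;>
      rcases Fin.eq_self_or_eq_succAbove i.succ b with rfl | ⟨y, rfl⟩ <;>
      simp only [g', Fin.insertNth_apply_same, Fin.insertNth_apply_succAbove, hadj, hvadj,
        pathGraph_adj, Fin.val_succ_succAbove,
        Fin.ext_iff, Fin.val_succ, Fin.le_def, SimpleGraph.irrefl, G.adj_comm _ v]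
    all_goals split_ifs <;> omega

end SimpleGraph

open SimpleGraph

section contractVert

variable {V W : Type*} {G : SimpleGraph V} {v : V}

theorem isIndContained_of_contractVert_of_forall_adj {H : SimpleGraph W}
    (f : H ↪g contractVert G v) (hf : ∀ a b, H.Adj a b → G.Adj (f a) (f b)) : H ⊴ G :=
  ⟨⟨⟨fun a => f a, Subtype.val_injective.comp f.injective⟩,
    fun {a b} => ⟨fun h => f.map_adj_iff.mp ⟨h.ne, Or.inl h⟩, hf a b⟩⟩⟩

section missingEdge

variable {n : ℕ} (f : pathGraph n ↪g contractVert G v) {i j : Fin n} (hij : (i : ℕ) + 1 = j)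
  (hnadj : ¬ G.Adj (f i) (f j))
include hij hnadj

theorem contractVert_pathGraph_adj_contracted_iff (x : Fin n) :
    G.Adj v (f x) ↔ x = i ∨ x = j := by
  have hiv : G.Adj (f i) v ∧ G.Adj v (f j) :=
    ((f.map_adj_iff.mpr (pathGraph_adj.mpr (Or.inl hij))).2).resolve_left hnadj
  constructor
  · intro hvx
    by_contra! hx
    have adj_of_ne : ∀ y, G.Adj v (f y) → x ≠ y → (pathGraph n).Adj x y := fun y hvy hne =>
      f.map_adj_iff.mp ⟨fun e => hne (f.injective (Subtype.ext e)), Or.inr ⟨hvx.symm, hvy⟩⟩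
    have hxi := pathGraph_adj.mp (adj_of_ne i hiv.1.symm hx.1)
    have hxj := pathGraph_adj.mp (adj_of_ne j hiv.2 hx.2)
    omega
  · rintro (rfl | rfl)
    exacts [hiv.1.symm, hiv.2]

theorem contractVert_pathGraph_adj_iff (x y : Fin n) :
    G.Adj (f x) (f y) ↔ (pathGraph n).Adj x y ∧ ¬ (x = i ∧ y = j) ∧ ¬ (x = j ∧ y = i) := by
  have hv := contractVert_pathGraph_adj_contracted_iff f hij hnadj
  constructor
  · intro hxy
    refine ⟨f.map_adj_iff.mp ⟨hxy.ne, Or.inl hxy⟩, ?_, ?_⟩ <;> rintro ⟨rfl, rfl⟩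
    exacts [hnadj hxy, hnadj hxy.symm]
  · rintro ⟨hxy, hij', hji'⟩
    refine (f.map_adj_iff.mpr hxy).2.resolve_right fun ⟨hxv, hvy⟩ => ?_
    have hne : x ≠ y := hxy.ne
    rcases (hv x).mp hxv.symm with rfl | rfl <;> rcases (hv y).mp hvy with rfl | rfl <;> tauto

end missingEdge

theorem pathGraph_isIndContained_of_contractVert {n : ℕ} (h : pathGraph n ⊴ contractVert G v) :
    pathGraph n ⊴ G := by
  obtain ⟨f⟩ := h
  by_cases hlift : ∀ x y, (pathGraph n).Adj x y → G.Adj (f x) (f y)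
  · exact isIndContained_of_contractVert_of_forall_adj f hlift
  obtain ⟨i, j, hij, hnadj⟩ : ∃ i j : Fin n, (i : ℕ) + 1 = j ∧ ¬ G.Adj (f i) (f j) := by
    push Not at hlift
    obtain ⟨x, y, hxy, hnadj⟩ := hlift
    rcases pathGraph_adj.mp hxy with h | h
    exacts [⟨x, y, h, hnadj⟩, ⟨y, x, h, fun h' => hnadj h'.symm⟩]
  exact (pathGraph_isIndContained_of_le n.le_succ).trans <|
    isIndContained_pathGraph_succ_of_subdivide (Subtype.val_injective.comp f.injective)
      (fun x => (f x).2) hij (contractVert_pathGraph_adj_iff f hij hnadj)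
      (contractVert_pathGraph_adj_contracted_iff f hij hnadj)

end contractVert

theorem pkFree_zero {V : Type*} (G : SimpleGraph V) : PkFree 0 G :=
  fun ⟨_, _, p, _, _, hlen⟩ => p.support_ne_nil (List.length_eq_zero_iff.mp hlen)

theorem pkFree_succ_iff {V : Type*} {G : SimpleGraph V} {n : ℕ} :
    PkFree (n + 1) G ↔ ¬ pathGraph (n + 1) ⊴ G := by
  constructor
  · rintro h ⟨f⟩
    obtain ⟨u, w, p, hp, hc, hlen⟩ := f.exists_isPath_isChordless
    exact h ⟨u, w, p, hp, fun a ha b hb => hc.mem_edges ha hb, by rw [Walk.length_support, hlen]⟩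
  · rintro h ⟨u, w, p, hp, hc, hlen⟩
    rw [← hlen, Walk.length_support] at h
    exact h (hp.pathGraph_isIndContained (Walk.isChordless_iff_forall_mem_edges.mpr
      fun a b ha hb hab => hc a ha b hb hab))

/-- `P_k`-free graphs are closed under vertex contraction. -/
theorem stmt5 {V : Type*} (k : ℕ) (G : SimpleGraph V) (v : V) (h : PkFree k G) :
    PkFree k (contractVert G v) := by
  cases k with
  | zero => exact pkFree_zero _
  | succ n =>
    rw [pkFree_succ_iff] at h ⊢
    exact fun hc => h (pathGraph_isIndContained_of_contractVert hc)
end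

section
/- In the net graph, with S the set of three degree-one vertices, the maximum number of vertex-disjoint S-paths is 1, while the minimum size of an S-cut is 2; hence ν(net,S) < κ(net,S). -/
def net : SimpleGraph (Fin 6) := SimpleGraph.fromRel (fun a b =>
  (a = 0 ∧ b = 1) ∨ (a = 1 ∧ b = 2) ∨ (a = 0 ∧ b = 2) ∨
  (a = 0 ∧ b = 3) ∨ (a = 1 ∧ b = 4) ∨ (a = 2 ∧ b = 5))
def netS : Set (Fin 6) := {3, 4, 5}
def IsSPath {V : Type*} (G : SimpleGraph V) (S : Set V) {s t : V} (p : G.Walk s t) : Prop :=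
  p.IsPath ∧ s ∈ S ∧ t ∈ S ∧ s ≠ t ∧ ∀ w ∈ p.support, w ∈ S → w = s ∨ w = t
instance : DecidableRel net.Adj := fun a b => by
  rw [net]
  exact decidable_of_iff _ (SimpleGraph.fromRel_adj _ a b).symm
lemma mem_netS (s : Fin 6) : s ∈ netS ↔ (s = 3 ∨ s = 4 ∨ s = 5) := by simp [netS]
def g : Fin 6 → Fin 6 := fun s => if s = 3 then 0 else if s = 4 then 1 else 2
lemma adj_pendant : ∀ s v : Fin 6, (s = 3 ∨ s = 4 ∨ s = 5) → net.Adj s v → v = g s := by decide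

lemma first_step {s t : Fin 6} (p : net.Walk s t) (hs : s = 3 ∨ s = 4 ∨ s = 5)
    (hst : s ≠ t) : g s ∈ p.support := by
  cases p with
  | nil => exact absurd rfl hst
  | cons h q =>
    have hv := adj_pendant _ _ hs h
    exact List.mem_cons_of_mem _ (hv ▸ q.start_mem_support)

lemma triangle_mem {s t : Fin 6} (p : net.Walk s t) (hp : IsSPath net netS p) :
    ((0:Fin 6) ∈ p.support ∧ (1:Fin 6) ∈ p.support) ∨
    ((0:Fin 6) ∈ p.support ∧ (2:Fin 6) ∈ p.support) ∨
    ((1:Fin 6) ∈ p.support ∧ (2:Fin 6) ∈ p.support) := by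
  obtain ⟨_, hs, ht, hst, _⟩ := hp
  rw [mem_netS] at hs ht
  have h1 : g s ∈ p.support := first_step p hs hst
  have h2 : g t ∈ p.support := by
    have := first_step p.reverse ht hst.symm
    rwa [SimpleGraph.Walk.support_reverse, List.mem_reverse] at this
  rcases hs with rfl | rfl | rfl <;> rcases ht with rfl | rfl | rfl <;>
    first
    | exact absurd rfl hst
    | (simp only [g] at h1 h2; norm_num at h1 h2; tauto)

/-- the path 3-0-1-4 -/
def p1 : net.Walk 3 4 :=
  .cons (show net.Adj 3 0 by decide)
    (.cons (show net.Adj 0 1 by decide) (.cons (show net.Adj 1 4 by decide) .nil))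
lemma supp1 : p1.support = [3, 0, 1, 4] := rfl
/-- the path 4-1-2-5 -/
def p2 : net.Walk 4 5 :=
  .cons (show net.Adj 4 1 by decide)
    (.cons (show net.Adj 1 2 by decide) (.cons (show net.Adj 2 5 by decide) .nil))
lemma supp2 : p2.support = [4, 1, 2, 5] := rfl
/-- the path 3-0-2-5 -/
def p3 : net.Walk 3 5 :=
  .cons (show net.Adj 3 0 by decide)
    (.cons (show net.Adj 0 2 by decide) (.cons (show net.Adj 2 5 by decide) .nil))
lemma supp3 : p3.support = [3, 0, 2, 5] := rfl

lemma sp1 : IsSPath net netS p1 := by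
  refine ⟨by rw [SimpleGraph.Walk.isPath_def, supp1]; decide, by rw [mem_netS]; decide,
    by rw [mem_netS]; decide, by decide, ?_⟩
  intro w hw hwS
  rw [mem_netS] at hwS
  have hw' : w ∈ ([3, 0, 1, 4] : List (Fin 6)) := by rwa [supp1] at hw
  rcases hwS with rfl | rfl | rfl <;> revert hw' <;> decide

lemma sp2 : IsSPath net netS p2 := by
  refine ⟨by rw [SimpleGraph.Walk.isPath_def, supp2]; decide, by rw [mem_netS]; decide,
    by rw [mem_netS]; decide, by decide, ?_⟩
  intro w hw hwS
  rw [mem_netS] at hwS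
  have hw' : w ∈ ([4, 1, 2, 5] : List (Fin 6)) := by rwa [supp2] at hw
  rcases hwS with rfl | rfl | rfl <;> revert hw' <;> decide

lemma sp3 : IsSPath net netS p3 := by
  refine ⟨by rw [SimpleGraph.Walk.isPath_def, supp3]; decide, by rw [mem_netS]; decide,
    by rw [mem_netS]; decide, by decide, ?_⟩
  intro w hw hwS
  rw [mem_netS] at hwS
  have hw' : w ∈ ([3, 0, 2, 5] : List (Fin 6)) := by rwa [supp3] at hw
  rcases hwS with rfl | rfl | rfl <;> revert hw' <;> decide

/-- In the net, with `S` the three pendant vertices: there is an `S`-path; every packing of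
`S`-paths (pairwise disjoint on non-terminal vertices) has at most one path; there is an
`S`-cut of size 2; and every `S`-cut has size at least 2. Hence ν(net,S) = 1 < 2 = κ(net,S). -/
theorem stmt10 :
    (∃ (s t : Fin 6) (p : net.Walk s t), IsSPath net netS p) ∧
    (∀ (m : ℕ) (ends : Fin m → Fin 6 × Fin 6) (P : ∀ i, net.Walk (ends i).1 (ends i).2),
      (∀ i, IsSPath net netS (P i)) →
      (∀ i j, i ≠ j → ∀ w, w ∉ netS → w ∈ (P i).support → w ∉ (P j).support) →
      m ≤ 1) ∧
    (∃ U : Finset (Fin 6), (∀ u ∈ U, u ∉ netS) ∧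
      (∀ (s t : Fin 6) (p : net.Walk s t), IsSPath net netS p → ∃ w ∈ p.support, w ∈ U) ∧
      U.card = 2) ∧
    (∀ U : Finset (Fin 6), (∀ u ∈ U, u ∉ netS) →
      (∀ (s t : Fin 6) (p : net.Walk s t), IsSPath net netS p → ∃ w ∈ p.support, w ∈ U) →
      2 ≤ U.card) := by
  have hn0 : (0 : Fin 6) ∉ netS := by rw [mem_netS]; decide
  have hn1 : (1 : Fin 6) ∉ netS := by rw [mem_netS]; decide
  have hn2 : (2 : Fin 6) ∉ netS := by rw [mem_netS]; decide
  refine ⟨⟨3, 4, p1, sp1⟩, ?_, ?_, ?_⟩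
  · -- ν ≤ 1
    intro m ends P hP hdisj
    by_contra h
    push_neg at h
    set i0 : Fin m := ⟨0, by omega⟩
    set i1 : Fin m := ⟨1, by omega⟩
    have hne : i0 ≠ i1 := by simp [i0, i1, Fin.ext_iff]
    have key := hdisj i0 i1 hne
    have h0 := triangle_mem _ (hP i0)
    have h1 := triangle_mem _ (hP i1)
    rcases h0 with ⟨x0, x1⟩ | ⟨x0, x1⟩ | ⟨x0, x1⟩ <;>
      rcases h1 with ⟨y0, y1⟩ | ⟨y0, y1⟩ | ⟨y0, y1⟩ <;>
      first
      | exact key 0 hn0 x0 y0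
      | exact key 0 hn0 x0 y1
      | exact key 1 hn1 x0 y0
      | exact key 1 hn1 x0 y1
      | exact key 1 hn1 x1 y0
      | exact key 1 hn1 x1 y1
      | exact key 2 hn2 x1 y0
      | exact key 2 hn2 x1 y1
  · -- cut {0,1}
    refine ⟨{0, 1}, ?_, ?_, by decide⟩
    · intro u hu
      have : u = 0 ∨ u = 1 := by
        simpa using hu
      rcases this with rfl | rfl <;> assumption
    · intro s t p hp
      rcases triangle_mem p hp with ⟨a, _⟩ | ⟨a, _⟩ | ⟨a, _⟩
      · exact ⟨0, a, by decide⟩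
      · exact ⟨0, a, by decide⟩
      · exact ⟨1, a, by decide⟩
  · -- every cut has ≥ 2
    intro U hU hhit
    by_contra h
    push_neg at h
    have hcard : U.card ≤ 1 := by omega
    have huniq := Finset.card_le_one.mp hcard
    have hU' : ∀ w ∈ U, w = 0 ∨ w = 1 ∨ w = 2 := by
      intro w hw
      have hw' := hU w hw
      rw [mem_netS] at hw'
      fin_cases w <;> simp_all
    obtain ⟨w1, hw1s, hw1U⟩ := hhit _ _ p1 sp1
    obtain ⟨w2, hw2s, hw2U⟩ := hhit _ _ p2 sp2
    obtain ⟨w3, hw3s, hw3U⟩ := hhit _ _ p3 sp3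
    have m1 : w1 ∈ ([3, 0, 1, 4] : List (Fin 6)) := by rwa [supp1] at hw1s
    have m2 : w2 ∈ ([4, 1, 2, 5] : List (Fin 6)) := by rwa [supp2] at hw2s
    have m3 : w3 ∈ ([3, 0, 2, 5] : List (Fin 6)) := by rwa [supp3] at hw3s
    have e12 : w1 = w2 := huniq _ hw1U _ hw2U
    have e13 : w1 = w3 := huniq _ hw1U _ hw3U
    have c1 := hU' _ hw1U
    have c2 := hU' _ hw2U
    have c3 := hU' _ hw3U
    subst e12 e13
    rcases c1 with rfl | rfl | rfl <;> simp_all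
end

section
/- Menger's theorem (vertex version via auxiliary sources): Let H be a graph with two distinguished non-adjacent vertices s_a and s_b. Then the maximum number of internally vertex-disjoint (s_a,s_b)-paths equals the minimum size of a set of vertices in V(H)∖{s_a,s_b} whose removal disconnects s_a from s_b. -/
/-!
The set version of Menger's theorem (Diestel, first proof): if every `A`–`B` separator of `G` has
at least `k` vertices, then `G` has `k` disjoint `A`–`B` paths. Induct on the number of edges.
For an edge `xy`, contract it. If the contraction still needs `k` vertices to separate the images
of `A` and `B`, its `k` disjoint paths lift to `G`. Otherwise the preimage `Y` of a smaller
separator of the contraction is an `A`–`B` separator of size `k` containing `x` and `y`. In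
`G - xy`, every `A`–`Y` or `Y`–`B` separator still separates `A` from `B` in `G`, so induction
gives `k` disjoint `A`–`Y` paths and `k` disjoint `Y`–`B` paths. Cut at their first (last) vertex
in `Y`, the two families meet only in `Y`, because `Y` separates, and glue along `Y`.

The terminal version is the set version for `H` with the edges at `sa` and `sb` removed,
`A = N(sa)` and `B = N(sb)`: internally disjoint `sa`–`sb` paths are disjoint `A`–`B` paths
extended by the two terminals, and vertex cuts avoiding `sa`, `sb` are the `A`–`B` separators
with `sa`, `sb` discarded.
-/

open Finset

namespace SimpleGraph

variable {V : Type*} {G : SimpleGraph V}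

def Separates (G : SimpleGraph V) (A B : Set V) (S : Finset V) : Prop :=
  ∀ ⦃a b : V⦄ (w : G.Walk a b), a ∈ A → b ∈ B → ∃ z ∈ w.support, z ∈ S

def HasDisjointPaths (G : SimpleGraph V) (A B : Set V) (k : ℕ) : Prop :=
  ∃ (a b : Fin k → V) (p : ∀ i, G.Walk (a i) (b i)),
    (∀ i, a i ∈ A) ∧ (∀ i, b i ∈ B) ∧ (∀ i, (p i).IsPath) ∧
      Pairwise fun i j => (p i).support.Disjoint (p j).support

variable {A B : Set V} {S : Finset V} {k : ℕ}

lemma Separates.symm (h : G.Separates A B S) : G.Separates B A S := fun _ _ w ha hb => by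
  simpa using h w.reverse hb ha

lemma HasDisjointPaths.symm (h : G.HasDisjointPaths A B k) : G.HasDisjointPaths B A k := by
  obtain ⟨a, b, p, ha, hb, hp, hdisj⟩ := h
  exact ⟨b, a, fun i => (p i).reverse, hb, ha, fun i => (hp i).reverse,
    fun i j hij => by simpa using hdisj hij⟩

lemma HasDisjointPaths.mono {G' : SimpleGraph V} (hle : G ≤ G') (h : G.HasDisjointPaths A B k) :
    G'.HasDisjointPaths A B k := by
  obtain ⟨a, b, p, ha, hb, hp, hdisj⟩ := h
  exact ⟨a, b, fun i => (p i).mapLe hle, ha, hb, fun i => (Walk.isPath_mapLe hle).2 (hp i),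
    by simpa using hdisj⟩

lemma injective_of_pairwise_disjoint {ι : Type*} {L : ι → List V}
    (h : Pairwise fun i j => (L i).Disjoint (L j)) {f : ι → V} (hf : ∀ i, f i ∈ L i) :
    Function.Injective f :=
  fun i j hij => by_contra fun hne => h hne (hf i) (hij ▸ hf j)

lemma HasDisjointPaths.le_card (h : G.HasDisjointPaths A B k) (hS : G.Separates A B S) :
    k ≤ #S := by
  obtain ⟨a, b, p, ha, hb, -, hdisj⟩ := h
  choose z hz hzS using fun i => hS (p i) (ha i) (hb i)
  simpa using card_le_card_of_injOn (s := univ) z (fun i _ => hzS i)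
    (injective_of_pairwise_disjoint hdisj hz).injOn

lemma hasDisjointPaths_of_subset_inter (hS : ↑S ⊆ A ∩ B) (hk : k ≤ #S) :
    G.HasDisjointPaths A B k := by
  let e : Fin k ↪ S := (Fin.castLEEmb hk).trans S.equivFin.symm.toEmbedding
  refine ⟨fun i => e i, fun i => e i, fun _ => .nil, fun i => (hS (e i).2).1,
    fun i => (hS (e i).2).2, fun _ => .nil, fun i j hij => ?_⟩
  simpa [Subtype.ext_iff] using e.injective.ne hij.symm

lemma hasDisjointPaths_of_eq_bot [Fintype V] (hG : G = ⊥)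
    (h : ∀ S : Finset V, G.Separates A B S → k ≤ #S) : G.HasDisjointPaths A B k := by
  classical
  refine hasDisjointPaths_of_subset_inter (S := univ.filter (· ∈ A ∩ B)) (by simp) (h _ ?_)
  rintro a b (_ | ⟨hadj, _⟩) ha hb
  · exact ⟨a, by simp, by simp [ha, hb]⟩
  · simp [hG] at hadj

lemma Walk.exists_walk_to_first_mem {Y : Set V} :
    ∀ {u v : V} (w : G.Walk u v), (∃ z ∈ w.support, z ∈ Y) →
      ∃ t ∈ Y, ∃ w' : G.Walk u t, w'.support ⊆ w.support ∧ ∀ z ∈ w'.support, z ∈ Y → z = t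
  | _, _, .nil, ⟨z, hz, hzY⟩ => by
    rw [Walk.support_nil, List.mem_singleton] at hz
    subst hz
    exact ⟨z, hzY, .nil, by simp, by simp⟩
  | u, _, .cons hadj w, ⟨z, hz, hzY⟩ => by
    by_cases hu : u ∈ Y
    · exact ⟨u, hu, .nil, by simp, by simp⟩
    have hzw : z ∈ w.support := by
      rw [Walk.support_cons, List.mem_cons] at hz
      exact hz.resolve_left (by rintro rfl; exact hu hzY)
    obtain ⟨t, ht, w', hsub, hfirst⟩ := exists_walk_to_first_mem w ⟨z, hzw, hzY⟩
    refine ⟨t, ht, .cons hadj w', ?_, ?_⟩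
    · simpa using List.subset_cons_of_subset _ hsub
    · simp only [Walk.support_cons, List.mem_cons, forall_eq_or_imp]
      exact ⟨fun h => absurd h hu, hfirst⟩

lemma Separates.of_deleteEdges {Y : Finset V} {x y : V} (hxy : x ≠ y) (hx : x ∈ Y) (hy : y ∈ Y)
    (hY : G.Separates A B Y) (hS : (G.deleteEdges {s(x, y)}).Separates A Y S) :
    G.Separates A B S := by
  intro a b w ha hb
  obtain ⟨t, ht, w', hsub, hfirst⟩ := w.exists_walk_to_first_mem (hY w ha hb)
  have he : s(x, y) ∉ w'.edges := fun he => hxy <|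
    (hfirst x (w'.fst_mem_support_of_mem_edges he) hx).trans
      (hfirst y (w'.snd_mem_support_of_mem_edges he) hy).symm
  obtain ⟨z, hz, hzS⟩ := hS (w'.toDeleteEdge _ he) ha ht
  exact ⟨z, hsub (by simpa using hz), hzS⟩

lemma Walk.IsPath.append_of_inter {u v w : V} {p : G.Walk u v} {q : G.Walk v w} (hp : p.IsPath)
    (hq : q.IsPath) (h : ∀ z ∈ p.support, z ∈ q.support → z = v) : (p.append q).IsPath := by
  have hq' := hq.support_nodup
  rw [← q.cons_tail_support, List.nodup_cons] at hq'
  rw [Walk.isPath_def, Walk.support_append, List.nodup_append]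
  refine ⟨hp.support_nodup, hq'.2, fun z hz z' hz' hzz' => ?_⟩
  subst hzz'
  exact hq'.1 (h z hz (List.mem_of_mem_tail hz') ▸ hz')

lemma HasDisjointPaths.exists_first_mem {Y : Set V} (h : G.HasDisjointPaths A Y k) :
    ∃ (a t : Fin k → V) (p : ∀ i, G.Walk (a i) (t i)), (∀ i, a i ∈ A) ∧ (∀ i, t i ∈ Y) ∧
      (∀ i, (p i).IsPath) ∧ (Pairwise fun i j => (p i).support.Disjoint (p j).support) ∧
      ∀ i, ∀ z ∈ (p i).support, z ∈ Y → z = t i := by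
  classical
  obtain ⟨a, b, p, ha, hb, -, hdisj⟩ := h
  choose t ht w hsub hfirst using fun i =>
    (p i).exists_walk_to_first_mem ⟨b i, (p i).end_mem_support, hb i⟩
  have hsub' i : (w i).bypass.support ⊆ (p i).support :=
    List.Subset.trans (w i).support_bypass_subset_support (hsub i)
  exact ⟨a, t, fun i => (w i).bypass, ha, ht, fun i => (w i).bypass_isPath,
    fun i j hij _ hzi hzj => hdisj hij (hsub' i hzi) (hsub' j hzj),
    fun i z hz => hfirst i z ((w i).support_bypass_subset_support hz)⟩

lemma Separates.mem_of_mem_support {Y : Finset V} (hY : G.Separates A B Y) {a t b s z : V}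
    {p : G.Walk a t} {q : G.Walk b s} (ha : a ∈ A) (hb : b ∈ B) (hp : p.IsPath) (hq : q.IsPath)
    (hpY : ∀ v ∈ p.support, v ∈ Y → v = t) (hqY : ∀ v ∈ q.support, v ∈ Y → v = s)
    (hzp : z ∈ p.support) (hzq : z ∈ q.support) : z ∈ Y := by
  classical
  by_contra hz
  obtain ⟨v, hv, hvY⟩ := hY ((p.takeUntil z hzp).append (q.takeUntil z hzq).reverse) ha hb
  rw [Walk.mem_support_append_iff, Walk.support_reverse, List.mem_reverse] at hv
  rcases hv with hv | hv
  · obtain rfl := hpY v (p.support_takeUntil_subset_support hzp hv) hvY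
    exact Walk.endpoint_notMem_support_takeUntil hp hzp (ne_of_mem_of_not_mem hvY hz) hv
  · obtain rfl := hqY v (q.support_takeUntil_subset_support hzq hv) hvY
    exact Walk.endpoint_notMem_support_takeUntil hq hzq (ne_of_mem_of_not_mem hvY hz) hv

lemma Separates.hasDisjointPaths {Y : Finset V} (hY : G.Separates A B Y) (hYk : #Y ≤ k)
    (h₁ : G.HasDisjointPaths A Y k) (h₂ : G.HasDisjointPaths Y B k) :
    G.HasDisjointPaths A B k := by
  classical
  obtain ⟨a, t, p, ha, ht, hp, hdp, hpY⟩ := h₁.exists_first_mem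
  obtain ⟨b, s, q, hb, hs, hq, hdq, hqY⟩ := h₂.symm.exists_first_mem
  have hcross i j z (hzp : z ∈ (p i).support) (hzq : z ∈ (q j).support) : z = t i ∧ z = s j :=
    have hzY := hY.mem_of_mem_support (ha i) (hb j) (hp i) (hq j) (hpY i) (hqY j) hzp hzq
    ⟨hpY i z hzp hzY, hqY j z hzq hzY⟩
  have ht_inj := injective_of_pairwise_disjoint hdp fun i => (p i).end_mem_support
  have hs_inj := injective_of_pairwise_disjoint hdq fun i => (q i).end_mem_support
  have hsY : univ.image s = Y :=
    eq_of_subset_of_card_le (by simpa [subset_iff] using hs)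
      (by simpa [card_image_of_injective _ hs_inj] using hYk)
  choose σ hσ using fun i => by simpa [← hsY] using ht i
  have hσ_inj : Function.Injective σ := fun i j hij => ht_inj (by rw [← hσ, ← hσ, hij])
  refine ⟨a, fun i => b (σ i), fun i => (p i).append ((q (σ i)).reverse.copy (hσ i) rfl), ha,
    fun i => hb _, fun i => ?_, fun i j hij z hzi hzj => ?_⟩
  · refine (hp i).append_of_inter (by simpa using (hq (σ i)).reverse) fun z hzp hzq => ?_
    simp only [Walk.support_copy, Walk.support_reverse, List.mem_reverse] at hzq
    exact (hcross i (σ i) z hzp hzq).1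
  · simp only [Walk.mem_support_append_iff, Walk.support_copy, Walk.support_reverse,
      List.mem_reverse] at hzi hzj
    rcases hzi with hzi | hzi <;> rcases hzj with hzj | hzj
    · exact hdp hij hzi hzj
    · obtain ⟨hti, hsj⟩ := hcross i (σ j) z hzi hzj
      exact hij (ht_inj (hti.symm.trans (hsj.trans (hσ j))))
    · obtain ⟨htj, hsi⟩ := hcross j (σ i) z hzj hzi
      exact hij (ht_inj ((hσ i).symm.trans (hsi.symm.trans htj)))
    · exact hdq (hσ_inj.ne hij) hzi hzj

section Contraction

variable [DecidableEq V] {x y : V}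

local notation "π" => Function.update id y x

/-- Contraction of `x` and `y` into `x`; `y` becomes an isolated vertex. -/
def contractEdge (G : SimpleGraph V) (x y : V) : SimpleGraph V :=
  fromEdgeSet (Sym2.map (Function.update id y x) '' G.edgeSet)

lemma contractEdge_adj_of_adj {u v : V} (h : G.Adj u v) (hne : π u ≠ π v) :
    (G.contractEdge x y).Adj (π u) (π v) :=
  (fromEdgeSet_adj _).2 ⟨⟨s(u, v), h, rfl⟩, hne⟩

lemma exists_adj_of_contractEdge_adj {u v : V} (h : (G.contractEdge x y).Adj u v) :
    ∃ u' v', G.Adj u' v' ∧ π u' = u ∧ π v' = v := by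
  obtain ⟨⟨e, he, hev⟩, -⟩ := (fromEdgeSet_adj _).1 h
  induction e with
  | h a b =>
    rw [Sym2.map_mk, Sym2.eq_iff] at hev
    rcases hev with ⟨rfl, rfl⟩ | ⟨rfl, rfl⟩
    exacts [⟨a, b, he, rfl, rfl⟩, ⟨b, a, G.adj_symm he, rfl, rfl⟩]

lemma ncard_edgeSet_contractEdge_lt [Finite V] (hxy : G.Adj x y) :
    (G.contractEdge x y).edgeSet.ncard < G.edgeSet.ncard :=
  calc (G.contractEdge x y).edgeSet.ncard
      ≤ (Sym2.map π '' G.edgeSet \ {s(x, x)}).ncard := by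
        refine Set.ncard_le_ncard ?_ (Set.toFinite _)
        rw [contractEdge, edgeSet_fromEdgeSet]
        exact Set.sdiff_subset_sdiff_right (by simp)
    _ < (Sym2.map π '' G.edgeSet).ncard :=
        Set.ncard_sdiff_singleton_lt_of_mem ⟨s(x, y), hxy, by simp [hxy.ne]⟩ (Set.toFinite _)
    _ ≤ G.edgeSet.ncard := Set.ncard_image_le (Set.toFinite _)

lemma Walk.exists_contractEdge_walk {u v : V} (w : G.Walk u v) :
    ∃ w' : (G.contractEdge x y).Walk (π u) (π v), w'.support ⊆ w.support.map π := by
  induction w with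
  | nil => exact ⟨.nil, by simp⟩
  | @cons u m _ h w ih =>
    obtain ⟨w', hw'⟩ := ih
    by_cases hum : π u = π m
    · exact ⟨w'.copy hum.symm rfl, by simpa using List.subset_cons_of_subset _ hw'⟩
    · exact ⟨.cons (contractEdge_adj_of_adj h hum) w', by simpa using List.subset_cons_of_subset _ hw'⟩

lemma exists_walk_of_contractEdge_eq (hxy : G.Adj x y) {a b : V} (h : π a = π b) :
    ∃ w : G.Walk a b, ∀ z ∈ w.support, π z = π a := by
  by_cases hab : a = b
  · subst hab
    exact ⟨.nil, by simp⟩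
  have hadj : G.Adj a b := by
    by_cases ha : a = y <;> by_cases hb : b = y <;>
      simp_all [adj_comm]
  exact ⟨.cons hadj .nil, by simp [h]⟩

lemma Walk.exists_walk_of_contractEdge (hxy : G.Adj x y) {u v : V}
    (w : (G.contractEdge x y).Walk u v) {u' v' : V} (hu : π u' = u) (hv : π v' = v) :
    ∃ w' : G.Walk u' v', ∀ z ∈ w'.support, π z ∈ w.support := by
  induction w generalizing u' with
  | nil =>
    obtain ⟨w', hw'⟩ := exists_walk_of_contractEdge_eq hxy (hu.trans hv.symm)
    exact ⟨w', fun z hz => by simp [hw' z hz, hu]⟩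
  | cons h w ih =>
    obtain ⟨u₀, m₀, hadj, rfl, rfl⟩ := exists_adj_of_contractEdge_adj h
    obtain ⟨b, hb⟩ := exists_walk_of_contractEdge_eq hxy hu
    obtain ⟨w', hw'⟩ := ih rfl hv
    refine ⟨b.append (.cons hadj w'), fun z hz => ?_⟩
    rw [Walk.mem_support_append_iff, Walk.support_cons, List.mem_cons] at hz
    rcases hz with hz | rfl | hz
    · simp [hb z hz, hu]
    · simp
    · simp [hw' z hz]

lemma HasDisjointPaths.of_contractEdge (hxy : G.Adj x y)
    (h : (G.contractEdge x y).HasDisjointPaths (π '' A) (π '' B) k) : G.HasDisjointPaths A B k := by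
  obtain ⟨a, b, p, ha, hb, -, hdisj⟩ := h
  choose a' ha' hπa using ha
  choose b' hb' hπb using hb
  choose w hw using fun i => (p i).exists_walk_of_contractEdge hxy (hπa i) (hπb i)
  have hsub i {z} (hz : z ∈ (w i).bypass.support) : π z ∈ (p i).support :=
    hw i z ((w i).support_bypass_subset_support hz)
  exact ⟨a', b', fun i => (w i).bypass, ha', hb', fun i => (w i).bypass_isPath,
    fun i j hij _ hzi hzj => hdisj hij (hsub i hzi) (hsub j hzj)⟩

lemma Separates.preimage_contractEdge [Fintype V] {Z : Finset V}
    (hZ : (G.contractEdge x y).Separates (π '' A) (π '' B) Z) :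
    G.Separates A B (univ.filter fun v => π v ∈ Z) := by
  intro a b w ha hb
  obtain ⟨w', hw'⟩ := w.exists_contractEdge_walk (x := x) (y := y)
  obtain ⟨z, hz, hzZ⟩ := hZ w' ⟨a, ha, rfl⟩ ⟨b, hb, rfl⟩
  obtain ⟨z₀, hz₀, rfl⟩ := List.mem_map.1 (hw' hz)
  exact ⟨z₀, hz₀, by simpa using hzZ⟩

lemma exists_separator_of_contractEdge [Fintype V] (hxy : x ≠ y)
    (h : ∀ S : Finset V, G.Separates A B S → k ≤ #S) {Z : Finset V}
    (hZ : (G.contractEdge x y).Separates (π '' A) (π '' B) Z) (hZk : #Z < k) :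
    ∃ Y : Finset V, G.Separates A B Y ∧ #Y ≤ k ∧ x ∈ Y ∧ y ∈ Y := by
  set Y := univ.filter fun v => π v ∈ Z
  have hY := hZ.preimage_contractEdge
  have hYZ : Y ⊆ insert y Z := fun v hv => by
    by_cases hvy : v = y <;> simp_all [Y, Function.update_of_ne]
  -- `#Z < k ≤ #Y` forces `y ∈ Y`, and then `π y = x ∈ Z` puts `x` into `Y` as well.
  have hy : y ∈ Y := by
    by_contra hy
    have := card_le_card ((subset_insert_iff_of_notMem hy).1 hYZ)
    have := h Y hY
    omega
  refine ⟨Y, hY, ?_, ?_, hy⟩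
  · have := card_le_card hYZ
    have := card_insert_le y Z
    omega
  · simp_all [Y]

end Contraction

theorem hasDisjointPaths_of_le_card_separators [Fintype V]
    (h : ∀ S : Finset V, G.Separates A B S → k ≤ #S) : G.HasDisjointPaths A B k := by
  classical
  induction hn : G.edgeSet.ncard using Nat.strong_induction_on generalizing G A B with
  | _ n ih =>
  subst hn
  by_cases hG : G = ⊥
  · exact hasDisjointPaths_of_eq_bot hG h
  obtain ⟨x, y, hxy⟩ := ne_bot_iff_exists_adj.1 hG
  by_cases hC : ∀ S : Finset V,
      (G.contractEdge x y).Separates (Function.update id y x '' A)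
        (Function.update id y x '' B) S → k ≤ #S
  · exact (ih _ (ncard_edgeSet_contractEdge_lt hxy) hC rfl).of_contractEdge hxy
  push Not at hC
  obtain ⟨Z, hZ, hZk⟩ := hC
  obtain ⟨Y, hY, hYk, hx, hy⟩ := exists_separator_of_contractEdge hxy.ne h hZ hZk
  have hlt : (G.deleteEdges {s(x, y)}).edgeSet.ncard < G.edgeSet.ncard := by
    rw [edgeSet_deleteEdges]
    exact Set.ncard_sdiff_singleton_lt_of_mem hxy (Set.toFinite _)
  have hAY := ih _ hlt (fun S hS => h S (hY.of_deleteEdges hxy.ne hx hy hS)) rfl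
  have hYB := ih _ hlt (fun S hS => h S (hY.symm.of_deleteEdges hxy.ne hx hy hS.symm).symm) rfl
  exact hY.hasDisjointPaths hYk (hAY.mono (deleteEdges_le _)) (hYB.mono (deleteEdges_le _))

lemma Walk.notMem_support_of_deleteIncidenceSet {x u v : V}
    (w : (G.deleteIncidenceSet x).Walk u v) (hu : u ≠ x) : x ∉ w.support := by
  induction w with
  | nil => simpa using hu.symm
  | cons h w ih => simpa [hu.symm] using ih (deleteIncidenceSet_adj.1 h).2.2

lemma Walk.exists_deleteIncidenceSet_walk {x u v : V} (w : G.Walk u v) (hx : x ∉ w.support) :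
    ∃ w' : (G.deleteIncidenceSet x).Walk u v, w'.support = w.support :=
  ⟨w.toDeleteEdges _ fun _ he hinc => hx (w.mem_support_of_mem_edges he hinc.2),
    Walk.support_transfer _ _⟩

section Terminals

variable {H : SimpleGraph V} {sa sb : V}

def IsVertexCut (H : SimpleGraph V) (sa sb : V) (U : Finset V) : Prop :=
  sa ∉ U ∧ sb ∉ U ∧ ∀ p : H.Walk sa sb, p.IsPath → ∃ w ∈ p.support, w ∈ U

lemma Walk.ne_of_mem_support_deleteIncidenceSet (hnadj : ¬H.Adj sa sb) {a b z : V}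
    (ha : H.Adj sa a) (m : ((H.deleteIncidenceSet sa).deleteIncidenceSet sb).Walk a b)
    (hz : z ∈ m.support) : z ≠ sa ∧ z ≠ sb := by
  have hsa : sa ∉ (m.mapLe (deleteIncidenceSet_le _ sb)).support :=
    Walk.notMem_support_of_deleteIncidenceSet _ ha.ne.symm
  have hsb : sb ∉ m.support :=
    Walk.notMem_support_of_deleteIncidenceSet _ fun h => hnadj (h ▸ ha)
  simp only [Walk.support_mapLe_eq_support] at hsa
  exact ⟨ne_of_mem_of_not_mem hz hsa, ne_of_mem_of_not_mem hz hsb⟩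

lemma Walk.IsPath.exists_inner {p : H.Walk sa sb} (hp : p.IsPath) (hne : sa ≠ sb)
    (hnadj : ¬H.Adj sa sb) :
    ∃ (a b : V) (m : ((H.deleteIncidenceSet sa).deleteIncidenceSet sb).Walk a b),
      H.Adj sa a ∧ H.Adj b sb ∧ m.IsPath ∧ m.support ⊆ p.support := by
  cases p with
  | nil => exact absurd rfl hne
  | @cons _ a _ ha q =>
    have hq : ¬q.Nil := Walk.not_nil_of_ne fun h => hnadj (h ▸ ha)
    obtain ⟨b, r, hb, rfl⟩ : ∃ (b : V) (r : H.Walk a b) (hb : H.Adj b sb), q = r.concat hb :=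
      ⟨_, _, _, (q.concat_dropLast (q.adj_penultimate hq)).symm⟩
    rw [Walk.cons_isPath_iff, Walk.concat_isPath_iff] at hp
    obtain ⟨⟨hr, hsb⟩, hsa⟩ := hp
    rw [Walk.support_concat, List.mem_append, not_or] at hsa
    obtain ⟨r₁, hr₁⟩ := r.exists_deleteIncidenceSet_walk hsa.1
    obtain ⟨r₂, hr₂⟩ := r₁.exists_deleteIncidenceSet_walk (hr₁ ▸ hsb)
    refine ⟨a, b, r₂, ha, hb, ?_, ?_⟩
    · rw [Walk.isPath_def, hr₂, hr₁]
      exact hr.support_nodup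
    · intro z hz
      simp [hr₂, hr₁] at hz
      simp [hz]

lemma IsVertexCut.separates {U : Finset V} (hU : H.IsVertexCut sa sb U) :
    ((H.deleteIncidenceSet sa).deleteIncidenceSet sb).Separates
      {v | H.Adj sa v} {v | H.Adj v sb} U := by
  classical
  obtain ⟨hsa, hsb, hcut⟩ := hU
  intro a b w ha hb
  have hle := (deleteIncidenceSet_le (H.deleteIncidenceSet sa) sb).trans
    (deleteIncidenceSet_le H sa)
  obtain ⟨z, hz, hzU⟩ := hcut _ (Walk.cons ha ((w.mapLe hle).concat hb)).bypass_isPath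
  have hz' := Walk.support_bypass_subset_support _ hz
  simp only [Walk.support_cons, Walk.support_concat, Walk.support_mapLe_eq_support,
    List.mem_cons, List.mem_append, List.not_mem_nil, or_false] at hz'
  rcases hz' with h | hz' | h
  exacts [(hsa (h ▸ hzU)).elim, ⟨z, hz', hzU⟩, (hsb (h ▸ hzU)).elim]

lemma Separates.exists_isVertexCut (hne : sa ≠ sb) (hnadj : ¬H.Adj sa sb) {S : Finset V}
    (hS : ((H.deleteIncidenceSet sa).deleteIncidenceSet sb).Separates
      {v | H.Adj sa v} {v | H.Adj v sb} S) :
    ∃ U, H.IsVertexCut sa sb U ∧ #U ≤ #S := by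
  classical
  refine ⟨S \ {sa, sb}, ⟨by simp, by simp, fun p hp => ?_⟩, card_le_card sdiff_subset⟩
  obtain ⟨a, b, m, ha, hb, -, hsub⟩ := hp.exists_inner hne hnadj
  obtain ⟨z, hz, hzS⟩ := hS m ha hb
  have := Walk.ne_of_mem_support_deleteIncidenceSet hnadj ha m hz
  exact ⟨z, hsub hz, by simp [hzS, this.1, this.2]⟩

lemma hasDisjointPaths_of_internallyDisjoint (hne : sa ≠ sb) (hnadj : ¬H.Adj sa sb) {m : ℕ}
    {P : Fin m → H.Walk sa sb} (hP : ∀ i, (P i).IsPath)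
    (hdisj : ∀ i j, i ≠ j → ∀ w, w ∈ (P i).support → w ∈ (P j).support → w = sa ∨ w = sb) :
    ((H.deleteIncidenceSet sa).deleteIncidenceSet sb).HasDisjointPaths
      {v | H.Adj sa v} {v | H.Adj v sb} m := by
  choose a b p ha hb hp hsub using fun i => (hP i).exists_inner hne hnadj
  refine ⟨a, b, p, ha, hb, hp, fun i j hij z hzi hzj => ?_⟩
  have := Walk.ne_of_mem_support_deleteIncidenceSet hnadj (ha i) (p i) hzi
  rcases hdisj i j hij z (hsub i hzi) (hsub j hzj) with h | h
  exacts [this.1 h, this.2 h]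

lemma HasDisjointPaths.exists_internallyDisjoint (hne : sa ≠ sb) (hnadj : ¬H.Adj sa sb) {k : ℕ}
    (h : ((H.deleteIncidenceSet sa).deleteIncidenceSet sb).HasDisjointPaths
      {v | H.Adj sa v} {v | H.Adj v sb} k) :
    ∃ P : Fin k → H.Walk sa sb, (∀ i, (P i).IsPath) ∧
      ∀ i j, i ≠ j → ∀ w, w ∈ (P i).support → w ∈ (P j).support → w = sa ∨ w = sb := by
  obtain ⟨a, b, p, ha, hb, hp, hdisj⟩ := h
  have hle := (deleteIncidenceSet_le (H.deleteIncidenceSet sa) sb).trans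
    (deleteIncidenceSet_le H sa)
  have havoid i {z} (hz : z ∈ (p i).support) :=
    Walk.ne_of_mem_support_deleteIncidenceSet hnadj (ha i) (p i) hz
  refine ⟨fun i => .cons (ha i) (((p i).mapLe hle).concat (hb i)), fun i => ?_,
    fun i j hij z hzi hzj => ?_⟩
  · rw [Walk.cons_isPath_iff, Walk.concat_isPath_iff, Walk.isPath_mapLe,
      Walk.support_mapLe_eq_support]
    refine ⟨⟨hp i, fun h => (havoid i h).2 rfl⟩, fun h => ?_⟩
    simp only [Walk.support_concat, Walk.support_mapLe_eq_support, List.mem_append,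
      List.mem_singleton] at h
    rcases h with h | h
    exacts [(havoid i h).1 rfl, hne h]
  · simp only [Walk.support_cons, Walk.support_concat, Walk.support_mapLe_eq_support,
      List.mem_cons, List.mem_append, List.not_mem_nil, or_false] at hzi hzj
    rcases hzi with h | hzi | h
    · exact .inl h
    · rcases hzj with h | hzj | h
      exacts [.inl h, (hdisj hij hzi hzj).elim, .inr h]
    · exact .inr h

lemma exists_isVertexCut_forall_card_le [Fintype V] (hne : sa ≠ sb) (hnadj : ¬H.Adj sa sb) :
    ∃ U, H.IsVertexCut sa sb U ∧ ∀ U', H.IsVertexCut sa sb U' → #U ≤ #U' := by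
  classical
  obtain ⟨U, hU, -⟩ := Separates.exists_isVertexCut hne hnadj (S := univ)
    fun a _ w _ _ => ⟨a, w.start_mem_support, mem_univ a⟩
  obtain ⟨U₀, hU₀, hmin⟩ :=
    (univ.filter (H.IsVertexCut sa sb)).exists_min_image card ⟨U, by simpa using hU⟩
  exact ⟨U₀, (mem_filter.1 hU₀).2, fun U' hU' => hmin U' (by simpa using hU')⟩

end Terminals

end SimpleGraph

open SimpleGraph in
theorem stmt13_general {V : Type*} [Fintype V] (H : SimpleGraph V) (sa sb : V)
    (hne : sa ≠ sb) (hnadj : ¬ H.Adj sa sb) :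
    ∃ k : ℕ,
      (∃ P : Fin k → H.Walk sa sb, (∀ i, (P i).IsPath) ∧
        ∀ i j, i ≠ j → ∀ w, w ∈ (P i).support → w ∈ (P j).support → w = sa ∨ w = sb) ∧
      (∀ (m : ℕ) (P : Fin m → H.Walk sa sb), (∀ i, (P i).IsPath) →
        (∀ i j, i ≠ j → ∀ w, w ∈ (P i).support → w ∈ (P j).support → w = sa ∨ w = sb) →
        m ≤ k) ∧
      (∃ U : Finset V, sa ∉ U ∧ sb ∉ U ∧
        (∀ p : H.Walk sa sb, p.IsPath → ∃ w ∈ p.support, w ∈ U) ∧ U.card = k) ∧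
      (∀ U : Finset V, sa ∉ U → sb ∉ U →
        (∀ p : H.Walk sa sb, p.IsPath → ∃ w ∈ p.support, w ∈ U) → k ≤ U.card) := by
  obtain ⟨U₀, hU₀, hmin⟩ := exists_isVertexCut_forall_card_le hne hnadj
  have hpaths := hasDisjointPaths_of_le_card_separators fun S hS => by
    obtain ⟨U, hU, hUS⟩ := hS.exists_isVertexCut hne hnadj
    exact (hmin U hU).trans hUS
  refine ⟨#U₀, hpaths.exists_internallyDisjoint hne hnadj, fun m P hP hdisj => ?_,
    ⟨U₀, hU₀.1, hU₀.2.1, hU₀.2.2, rfl⟩, fun U h₁ h₂ h₃ => hmin U ⟨h₁, h₂, h₃⟩⟩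
  exact (hasDisjointPaths_of_internallyDisjoint hne hnadj hP hdisj).le_card hU₀.separates

/-- Menger's theorem (vertex version): for non-adjacent vertices `sa ≠ sb`, the maximum number
of internally vertex-disjoint `(sa,sb)`-paths equals the minimum size of a set of vertices of
`V ∖ {sa, sb}` meeting every `(sa,sb)`-path. -/
theorem stmt13 {V : Type*} [Fintype V] [DecidableEq V] (H : SimpleGraph V) (sa sb : V)
    (hne : sa ≠ sb) (hnadj : ¬ H.Adj sa sb) :
    ∃ k : ℕ,
      (∃ P : Fin k → H.Walk sa sb, (∀ i, (P i).IsPath) ∧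
        ∀ i j, i ≠ j → ∀ w, w ∈ (P i).support → w ∈ (P j).support → w = sa ∨ w = sb) ∧
      (∀ (m : ℕ) (P : Fin m → H.Walk sa sb), (∀ i, (P i).IsPath) →
        (∀ i j, i ≠ j → ∀ w, w ∈ (P i).support → w ∈ (P j).support → w = sa ∨ w = sb) →
        m ≤ k) ∧
      (∃ U : Finset V, sa ∉ U ∧ sb ∉ U ∧
        (∀ p : H.Walk sa sb, p.IsPath → ∃ w ∈ p.support, w ∈ U) ∧ U.card = k) ∧
      (∀ U : Finset V, sa ∉ U → sb ∉ U →
        (∀ p : H.Walk sa sb, p.IsPath → ∃ w ∈ p.support, w ∈ U) → k ≤ U.card) :=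
  stmt13_general H sa sb hne hnadj
end

section
/- If the graph of colors of an odd properly-colored cycle is a path or a cycle (i.e., has maximum degree 2 and is connected), then it must be an odd cycle; in particular the number of colors is odd. -/
/-!
The coloring maps the odd cycle onto an odd closed walk in the graph of colors `H`. In any graph
a shortest odd closed walk is a cycle. When all degrees are at most 2, every vertex of a cycle
already has both of its neighbours on the cycle, so in a connected graph the cycle passes through
every vertex exactly once: `H` is that odd cycle.
-/

namespace SimpleGraph

variable {V : Type*} {G : SimpleGraph V}

namespace Walk

lemma exists_length_eq_sub_of_isSubwalk {u v x : V} {p : G.Walk u v} {q : G.Walk x x}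
    (h : q.IsSubwalk p) : ∃ r : G.Walk u v, r.length = p.length - q.length := by
  obtain ⟨ru, rv, rfl⟩ := h
  exact ⟨ru.append rv, by simp only [length_append]; omega⟩

lemma length_mapToSubgraph {u v : V} (p : G.Walk u v) : p.mapToSubgraph.length = p.length :=
  (length_map _ _).symm.trans (congrArg length p.map_mapToSubgraph_hom)

/-- A repeated vertex would split `p` into two shorter closed walks, one of which has odd
length. -/
lemma isCycle_of_forall_odd_length_le {u : V} {p : G.Walk u u} (hodd : Odd p.length)
    (hmin : ∀ x (q : G.Walk x x), Odd q.length → p.length ≤ q.length) : p.IsCycle := by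
  have hpos : 0 < p.length := hodd.pos
  refine isCycle_iff_isPath_tail_and_le_length.mpr ⟨isPath_iff_isSubwalk_imp_nil.mpr ?_, ?_⟩
  · intro x q hq
    have hlt : q.length < p.length :=
      (length_le_of_isSubwalk hq).trans_lt (by rw [length_tail]; omega)
    obtain ⟨r, hr⟩ := exists_length_eq_sub_of_isSubwalk (hq.trans (isSubwalk_rfl p).tail)
    rw [← length_eq_zero_iff]
    by_contra hq0
    rcases Nat.even_or_odd q.length with heven | hodd'
    · have := hmin u r (hr ▸ Nat.Odd.sub_even hlt.le hodd heven)
      omega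
    · have := hmin x q hodd'
      omega
  · obtain ⟨k, hk⟩ := hodd
    have hne : p.length ≠ 1 := fun h ↦ G.irrefl (adj_of_length_eq_one h)
    omega

end Walk

lemma exists_isCycle_odd_length {u : V} (w : G.Walk u u) (hodd : Odd w.length) :
    ∃ (x : V) (p : G.Walk x x), p.IsCycle ∧ Odd p.length := by
  classical
  have hex : ∃ n, ∃ (x : V) (p : G.Walk x x), Odd p.length ∧ p.length = n :=
    ⟨_, u, w, hodd, rfl⟩
  obtain ⟨x, p, hp, hpn⟩ := Nat.find_spec hex
  refine ⟨x, p, Walk.isCycle_of_forall_odd_length_le hp fun y q hq ↦ ?_, hp⟩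
  rw [hpn]
  exact Nat.find_min' hex ⟨y, q, hq, rfl⟩

lemma Walk.IsCycle.neighborSet_eq [Finite V] {u x : V} {p : G.Walk u u} (hp : p.IsCycle)
    (hdeg : ∀ y, (G.neighborSet y).ncard ≤ 2) (hx : x ∈ p.support) :
    p.toSubgraph.neighborSet x = G.neighborSet x :=
  Set.eq_of_subset_of_ncard_le (p.toSubgraph.neighborSet_subset x)
    ((hdeg x).trans (hp.ncard_neighborSet_toSubgraph_eq_two hx).ge)

lemma Walk.IsCycle.mem_support_of_connected [Finite V] {u : V} {p : G.Walk u u} (hp : p.IsCycle)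
    (hconn : G.Connected) (hdeg : ∀ y, (G.neighborSet y).ncard ≤ 2) (x : V) :
    x ∈ p.support := by
  by_contra hx
  obtain ⟨d, -, hd, hd'⟩ :=
    (hconn.preconnected u x).some.exists_boundary_dart {y | y ∈ p.support} p.start_mem_support hx
  have hadj : p.toSubgraph.Adj d.fst d.snd := by
    rw [← Subgraph.mem_neighborSet, hp.neighborSet_eq hdeg hd]
    exact d.adj
  exact hd' (p.mem_verts_toSubgraph.mp hadj.snd_mem)

lemma Walk.IsCycle.isHamiltonianCycle_of_connected [Finite V] [DecidableEq V] {u : V}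
    {p : G.Walk u u} (hp : p.IsCycle) (hconn : G.Connected)
    (hdeg : ∀ y, (G.neighborSet y).ncard ≤ 2) :
    p.IsHamiltonianCycle := by
  refine ⟨hp, hp.isPath_tail.isHamiltonian_of_mem fun x ↦ ?_⟩
  rw [p.support_tail_of_not_nil hp.not_nil]
  rcases p.mem_support_iff.mp (hp.mem_support_of_connected hconn hdeg x) with rfl | h
  · exact p.end_mem_tail_support hp.not_nil
  · exact h

theorem Connected.ncard_neighborSet_eq_two_and_odd_card [Fintype V] (hconn : G.Connected)
    (hdeg : ∀ x, (G.neighborSet x).ncard ≤ 2) {u : V} (w : G.Walk u u) (hodd : Odd w.length) :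
    (∀ x, (G.neighborSet x).ncard = 2) ∧ Odd (Fintype.card V) := by
  classical
  obtain ⟨y, p, hp, hpodd⟩ := exists_isCycle_odd_length w hodd
  refine ⟨fun x ↦ ?_, ?_⟩
  · have hx := hp.mem_support_of_connected hconn hdeg x
    rw [← hp.neighborSet_eq hdeg hx]
    exact hp.ncard_neighborSet_toSubgraph_eq_two hx
  · rwa [← (hp.isHamiltonianCycle_of_connected hconn hdeg).length_eq]

end SimpleGraph

open SimpleGraph

theorem stmt14_general {V K : Type*} [Fintype K] (G : SimpleGraph V) (v : V) (p : G.Walk v v)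
    (hodd : Odd p.length) (c : V → K)
    (hc : ∀ a b : V, s(a, b) ∈ p.edges → c a ≠ c b)
    (H : SimpleGraph K)
    (hH : ∀ x y : K, H.Adj x y ↔ x ≠ y ∧ ∃ a b : V, s(a, b) ∈ p.edges ∧ c a = x ∧ c b = y)
    (hconn : H.Connected)
    (hdeg : ∀ x : K, (H.neighborSet x).ncard ≤ 2) :
    (∀ x : K, (H.neighborSet x).ncard = 2) ∧ Odd (Fintype.card K) := by
  let colorHom : p.toSubgraph.coe →g H :=
    ⟨fun a ↦ c a, fun {a b} hab ↦ by
      have hab' : s(a.1, b.1) ∈ p.edges := Walk.adj_toSubgraph_iff_mem_edges.mp hab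
      exact (hH _ _).mpr ⟨hc _ _ hab', a, b, hab', rfl, rfl⟩⟩
  refine hconn.ncard_neighborSet_eq_two_and_odd_card hdeg (p.mapToSubgraph.map colorHom) ?_
  rwa [Walk.length_map, Walk.length_mapToSubgraph]

/-- Let `p` be an odd cycle properly colored by `c`, with every color of `K` used, and let `H`
be the graph of colors (two colors adjacent iff some edge of the cycle joins them). If `H` is
connected with maximum degree at most 2, then `H` is an odd cycle: it is 2-regular and the
number of colors is odd. -/
theorem stmt14 {V K : Type*} [Fintype K] (G : SimpleGraph V) (v : V) (p : G.Walk v v)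
    (hp : p.IsCycle) (hodd : Odd p.length) (c : V → K)
    (hc : ∀ a b : V, s(a, b) ∈ p.edges → c a ≠ c b)
    (hsurj : ∀ x : K, ∃ a ∈ p.support, c a = x)
    (H : SimpleGraph K)
    (hH : ∀ x y : K, H.Adj x y ↔ x ≠ y ∧ ∃ a b : V, s(a, b) ∈ p.edges ∧ c a = x ∧ c b = y)
    (hconn : H.Connected)
    (hdeg : ∀ x : K, (H.neighborSet x).ncard ≤ 2) :
    (∀ x : K, (H.neighborSet x).ncard = 2) ∧ Odd (Fintype.card K) :=
  stmt14_general G v p hodd c hc H hH hconn hdeg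
end

section
/- Let C be an odd cycle properly colored with colors 1,…,n arranged so that every edge of C joins colors i and i+1 (indices mod n), with n ≥ 3 odd. Then for each pair of cyclically consecutive colors (i, i+1), the number of edges of C between color classes i and i+1 is odd. -/
/-!
Read the colours along the cycle as a closed walk `D` on the `n`-cycle `ℤ/n`: the edges of the
cycle coloured `{i, i + 1}` are the steps of `D` crossing the edge `{i, i + 1}`. Each visit of `D`
to the colour `j + 1` enters and leaves it through `{j, j + 1}` or `{j + 1, j + 2}`, so consecutive
edges of `ℤ/n` are crossed with the same parity. As every step crosses exactly one edge, the
crossing numbers add up to the odd length of the cycle; they cannot all be even, so all are odd.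
-/

theorem List.countP_add_countP_eq_of_forall {α : Type*} {l : List α} {p q r s : α → Bool}
    (h : ∀ x ∈ l, ((if p x then 1 else 0) + if q x then 1 else 0) =
      (if r x then 1 else 0) + if s x then 1 else 0) :
    l.countP p + l.countP q = l.countP r + l.countP s := by
  induction l with
  | nil => rfl
  | cons x l ih =>
    have := h x mem_cons_self
    have := ih fun y hy => h y (mem_cons_of_mem x hy)
    simp only [countP_cons]
    omega

theorem List.sum_countP_eq_length {ι α : Type*} [Fintype ι] {l : List α} {P : ι → α → Bool}
    (h : ∀ x ∈ l, ∃! i, P i x) : ∑ i, l.countP (P i) = l.length := by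
  classical
  induction l with
  | nil => simp
  | cons x l ih =>
    obtain ⟨a, ha, hunique⟩ := h x mem_cons_self
    have hfiber : ∀ i, (if P i x then 1 else 0) = if i = a then 1 else 0 := fun i => by
      by_cases hi : i = a
      · rw [if_pos hi, if_pos (hi ▸ ha)]
      · rw [if_neg hi, if_neg fun h => hi (hunique i h)]
    simp only [countP_cons, Finset.sum_add_distrib, hfiber, Finset.sum_ite_eq', Finset.mem_univ,
      if_true, length_cons, ih fun y hy => h y (mem_cons_of_mem x hy)]

theorem List.Nodup.ncard_setOf_mem_and {α : Type*} {l : List α} (hl : l.Nodup) (P : α → Prop)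
    [DecidablePred P] : {x | x ∈ l ∧ P x}.ncard = l.countP P := by
  classical
  have : {x | x ∈ l ∧ P x} = ((l.filter P).toFinset : Set α) := by ext; simp
  rw [this, Set.ncard_coe_finset, List.toFinset_card_of_nodup (hl.filter _),
    List.countP_eq_length_filter]

theorem Sym2.map_eq_mk_iff {α β : Type*} (f : α → β) (e : Sym2 α) (b₁ b₂ : β) :
    e.map f = s(b₁, b₂) ↔ ∃ a₁ a₂, e = s(a₁, a₂) ∧ f a₁ = b₁ ∧ f a₂ = b₂ := by
  induction e using Sym2.ind with
  | h x y =>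
    simp only [Sym2.map_mk, Sym2.eq_iff]
    constructor
    · rintro (⟨rfl, rfl⟩ | ⟨rfl, rfl⟩)
      · exact ⟨x, y, Or.inl ⟨rfl, rfl⟩, rfl, rfl⟩
      · exact ⟨y, x, Or.inr ⟨rfl, rfl⟩, rfl, rfl⟩
    · rintro ⟨a₁, a₂, (⟨rfl, rfl⟩ | ⟨rfl, rfl⟩), rfl, rfl⟩ <;> simp

theorem SimpleGraph.Walk.map_fst_darts_perm_map_snd_darts {V : Type*} {G : SimpleGraph V} {v : V}
    (p : G.Walk v v) : (p.darts.map (·.fst)).Perm (p.darts.map (·.snd)) := by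
  have h := List.perm_append_singleton v (p.darts.map (·.fst))
  rw [map_fst_darts_append, ← cons_map_snd_darts] at h
  exact h.symm.cons_inv

namespace Fin
variable {n : ℕ} [NeZero n]

open Fin.NatCast in
theorem forall_of_imp_add_one {P : Fin n → Prop} (h : ∀ j, P j → P (j + 1)) {i : Fin n}
    (hi : P i) (j : Fin n) : P j := by
  have key : ∀ m : ℕ, P (i + m) := by
    intro m
    induction m with
    | zero => simpa using hi
    | succ m ih => simpa [add_assoc] using h _ ih
  simpa using key (j - i).val

theorem odd_of_forall_even_add_add_one {x : Fin n → ℕ} (hx : ∀ j, Even (x j + x (j + 1)))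
    (hsum : Odd (∑ j, x j)) (i : Fin n) : Odd (x i) := by
  by_contra hi
  have hall : ∀ j, Even (x j) :=
    forall_of_imp_add_one (fun j hj => (Nat.even_add.mp (hx j)).mp hj) (Nat.not_odd_iff_even.mp hi)
  exact Nat.not_even_iff_odd.mpr hsum (Finset.even_sum _ fun j _ => hall j)

theorem sym2_mk_add_one_injective (hn : 3 ≤ n) :
    Function.Injective fun j : Fin n => s(j, j + 1) := by
  intro a b hab
  have htwo : (2 : Fin n) ≠ 0 := by simp [Fin.ext_iff, Nat.mod_eq_of_lt (by omega : 2 < n)]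
  rcases Sym2.eq_iff.mp hab with ⟨h, -⟩ | ⟨ha, hb⟩
  · exact h
  · exact absurd (by grind) htwo

theorem exists_sym2_eq_of_add_one {a b : Fin n} (h : b = a + 1 ∨ a = b + 1) :
    ∃ k, s(a, b) = s(k, k + 1) := by
  rcases h with rfl | rfl
  · exact ⟨a, rfl⟩
  · exact ⟨b, Sym2.eq_swap⟩

end Fin

section CrossingCount
variable {n : ℕ} [NeZero n]

def crossingCount (D : List (Fin n × Fin n)) (j : Fin n) : ℕ :=
  D.countP fun q => s(q.1, q.2) = s(j, j + 1)

theorem ite_crossing_add_ite_crossing (hn : 3 ≤ n) {x y a : Fin n} (h : s(x, y) = s(a, a + 1))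
    (j : Fin n) :
    ((if s(x, y) = s(j, j + 1) then 1 else 0) + if s(x, y) = s(j + 1, j + 1 + 1) then 1 else 0) =
      (if x = j + 1 then 1 else 0) + if y = j + 1 then 1 else 0 := by
  have hinj : ∀ b c : Fin n, s(b, b + 1) = s(c, c + 1) ↔ b = c := fun _ _ =>
    (Fin.sym2_mk_add_one_injective hn).eq_iff
  have hxy : ((if x = j + 1 then 1 else 0) + if y = j + 1 then 1 else 0) =
      (if a = j + 1 then 1 else 0) + if a + 1 = j + 1 then 1 else 0 := by
    rcases Sym2.eq_iff.mp h with ⟨rfl, rfl⟩ | ⟨rfl, rfl⟩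
    · rfl
    · exact add_comm _ _
  simp only [hxy, h, hinj, add_left_inj]
  exact add_comm _ _

variable {D : List (Fin n × Fin n)}

theorem crossingCount_add_crossingCount_add_one (hn : 3 ≤ n)
    (hstep : ∀ q ∈ D, q.2 = q.1 + 1 ∨ q.1 = q.2 + 1) (j : Fin n) :
    crossingCount D j + crossingCount D (j + 1) =
      D.countP (fun q => q.1 = j + 1) + D.countP (fun q => q.2 = j + 1) :=
  List.countP_add_countP_eq_of_forall fun q hq => by
    obtain ⟨a, ha⟩ := Fin.exists_sym2_eq_of_add_one (hstep q hq)
    simpa using ite_crossing_add_ite_crossing hn ha j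

theorem sum_crossingCount (hn : 3 ≤ n) (hstep : ∀ q ∈ D, q.2 = q.1 + 1 ∨ q.1 = q.2 + 1) :
    ∑ j, crossingCount D j = D.length :=
  List.sum_countP_eq_length fun q hq => by
    obtain ⟨a, ha⟩ := Fin.exists_sym2_eq_of_add_one (hstep q hq)
    refine ⟨a, by simpa using ha, fun j hj => ?_⟩
    exact Fin.sym2_mk_add_one_injective hn ((of_decide_eq_true hj).symm.trans ha)

theorem even_crossingCount_add_crossingCount_add_one (hn : 3 ≤ n)
    (hstep : ∀ q ∈ D, q.2 = q.1 + 1 ∨ q.1 = q.2 + 1)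
    (hclosed : (D.map Prod.fst).Perm (D.map Prod.snd)) (j : Fin n) :
    Even (crossingCount D j + crossingCount D (j + 1)) := by
  have hfst_snd : D.countP (fun q => q.1 = j + 1) = D.countP (fun q => q.2 = j + 1) := by
    simpa [List.countP_map, Function.comp_def] using hclosed.countP_eq (fun k => k = j + 1)
  rw [crossingCount_add_crossingCount_add_one hn hstep, hfst_snd]
  exact ⟨_, rfl⟩

theorem odd_crossingCount (hn : 3 ≤ n) (hstep : ∀ q ∈ D, q.2 = q.1 + 1 ∨ q.1 = q.2 + 1)
    (hclosed : (D.map Prod.fst).Perm (D.map Prod.snd)) (hodd : Odd D.length) (i : Fin n) :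
    Odd (crossingCount D i) :=
  Fin.odd_of_forall_even_add_add_one (even_crossingCount_add_crossingCount_add_one hn hstep hclosed)
    (sum_crossingCount hn hstep ▸ hodd) i

end CrossingCount

theorem stmt15_general {V : Type*} (n : ℕ) (hn : 3 ≤ n) [NeZero n]
    (G : SimpleGraph V) (v : V) (p : G.Walk v v) (hp : p.IsCycle) (hpodd : Odd p.length)
    (c : V → Fin n)
    (hc : ∀ a b : V, s(a, b) ∈ p.edges → (c b = c a + 1 ∨ c a = c b + 1))
    (i : Fin n) :
    Odd {e : Sym2 V | e ∈ p.edges ∧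
      ∃ a b : V, e = s(a, b) ∧ c a = i ∧ c b = i + 1}.ncard := by
  classical
  set D := p.darts.map fun d => (c d.fst, c d.snd)
  have hcount : {e : Sym2 V | e ∈ p.edges ∧ ∃ a b : V, e = s(a, b) ∧ c a = i ∧ c b = i + 1}.ncard
      = crossingCount D i := by
    simp_rw [← Sym2.map_eq_mk_iff]
    rw [hp.edges_nodup.ncard_setOf_mem_and]
    simp only [crossingCount, D, SimpleGraph.Walk.edges, List.countP_map, Function.comp_def]
    rfl
  rw [hcount]
  refine odd_crossingCount hn ?_ ?_ (by simpa [D] using hpodd) i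
  · simp only [D, List.forall_mem_map]
    exact fun d hd => hc _ _ (p.edges_eq_map_darts ▸ List.mem_map_of_mem hd)
  · simpa [D, Function.comp_def] using ((p.map_fst_darts_perm_map_snd_darts).map c)

/-- Let `p` be a cycle of odd length colored with colors `0, …, n-1` (`n ≥ 3` odd) so that every
edge of the cycle joins colors `i` and `i+1 (mod n)`. Then for each `i`, the number of edges of
the cycle between the color classes `i` and `i+1` is odd. -/
theorem stmt15 {V : Type*} (n : ℕ) (hn : 3 ≤ n) (hnodd : Odd n) [NeZero n]
    (G : SimpleGraph V) (v : V) (p : G.Walk v v) (hp : p.IsCycle) (hpodd : Odd p.length)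
    (c : V → Fin n)
    (hc : ∀ a b : V, s(a, b) ∈ p.edges → (c b = c a + 1 ∨ c a = c b + 1))
    (i : Fin n) :
    Odd {e : Sym2 V | e ∈ p.edges ∧
      ∃ a b : V, e = s(a, b) ∧ c a = i ∧ c b = i + 1}.ncard :=
  stmt15_general n hn G v p hp hpodd c hc i
end
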